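/- arXiv:1707.05638 — 9 statements merged into one kernel-verified Lean document; each statement's English description precedes it below -/
import Mathlib

section
/- Let c ≥ 1, μ ≥ 1 and δ > 0. Let φ : ℝ^c → ℝ^c be a homeomorphism with a fixed point x = φ(x) such that ‖φ⁻¹(y) − φ⁻¹(y')‖ ≤ μ·‖y − y'‖ for all y, y' in the closed ball of radius δ centered at x. Then there exist an integer k with 1 ≤ k ≤ (1 + 2μ)^c and vectors v_1, …, v_k ∈ ℝ^c with v_1 = 0 and ‖v_i‖ ≤ δ for every i, such that the closed ball of radius δ centered at x is contained in the union over i = 1, …, k of the translated images v_i + φ(B), where B is the open ball of radius δ centered at x. (This is the covering property underlying the construction of blending regions: the number k of translations depends only on the contraction bound μ and the dimension c.) -/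
/-!
Since `φ⁻¹` is `μ`-Lipschitz at its fixed point `x`, `φ(B)` contains the ball of radius `r = δ/μ`
around `x`. Take a maximal `r`-separated finite subset `s` of the closed `δ`-ball containing `x`:
by maximality the `r`-balls around its points cover the closed ball, so the translates
`(p - x) + φ(B)`, `p ∈ s`, do too. The balls of radius `r/2` around the points of `s` are disjoint
and lie in the ball of radius `δ + r/2`, so comparing volumes gives
`#s ≤ ((δ + r/2) / (r/2))^c = (1 + 2μ)^c`.
-/

open Metric Set MeasureTheory Module
open scoped ENNReal

theorem Finset.card_le_of_pairwise_le_dist {E : Type*} [NormedAddCommGroup E] [NormedSpace ℝ E]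
    [FiniteDimensional ℝ E] [MeasurableSpace E] [BorelSpace E] {s : Finset E} {x : E}
    {δ r : ℝ} (hδ : 0 ≤ δ) (hr : 0 < r) (hs : (s : Set E) ⊆ closedBall x δ)
    (hsep : (s : Set E).Pairwise fun p q => r ≤ dist p q) :
    (s.card : ℝ) ≤ (1 + 2 * δ / r) ^ finrank ℝ E := by
  let m : Measure E := Measure.addHaar
  set d := finrank ℝ E
  have hr2 : 0 < r / 2 := half_pos hr
  have hdisj : (s : Set E).PairwiseDisjoint fun p => ball p (r / 2) := fun p hp q hq hpq =>
    ball_disjoint_ball (by linarith [hsep hp hq hpq])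
  have hsub : ⋃ p ∈ s, ball p (r / 2) ⊆ closedBall x (δ + r / 2) :=
    iUnion₂_subset fun p hp => ball_subset_closedBall.trans
      (closedBall_subset_closedBall' (by linarith [mem_closedBall.1 (hs hp)]))
  have hvol :
      (s.card : ℝ≥0∞) * ENNReal.ofReal ((r / 2) ^ d) ≤ ENNReal.ofReal ((δ + r / 2) ^ d) := by
    have := measure_mono (μ := m) hsub
    rw [measure_biUnion_finset hdisj fun _ _ => measurableSet_ball] at this
    simp only [m.addHaar_ball_of_pos _ hr2, m.addHaar_closedBall _ (by positivity : 0 ≤ δ + r / 2),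
      Finset.sum_const, nsmul_eq_mul, ← mul_assoc] at this
    exact (ENNReal.mul_le_mul_iff_left (measure_ball_pos m 0 one_pos).ne'
      measure_ball_lt_top.ne).1 this
  have hreal : (s.card : ℝ) * (r / 2) ^ d ≤ (δ + r / 2) ^ d := by
    rwa [← ENNReal.ofReal_natCast, ← ENNReal.ofReal_mul (by positivity),
      ENNReal.ofReal_le_ofReal_iff (by positivity)] at hvol
  calc (s.card : ℝ) ≤ (δ + r / 2) ^ d / (r / 2) ^ d := by rwa [le_div_iff₀ (by positivity)]
    _ = (1 + 2 * δ / r) ^ d := by rw [← div_pow]; congr 1; field_simp; ring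

theorem exists_finset_maximal_separated {X : Type*} [PseudoMetricSpace X] {K : Set X} {x : X}
    (hx : x ∈ K) {r : ℝ} (hr : 0 < r) {N : ℕ}
    (hN : ∀ s : Finset X, (s : Set X) ⊆ K → (s : Set X).Pairwise (fun p q => r ≤ dist p q) →
      s.card ≤ N) :
    ∃ s : Finset X, x ∈ s ∧ (s : Set X) ⊆ K ∧ (s : Set X).Pairwise (fun p q => r ≤ dist p q) ∧
      ∀ y ∈ K, ∃ p ∈ s, dist y p < r := by
  classical
  let P : Finset X → Prop := fun s =>
    x ∈ s ∧ (s : Set X) ⊆ K ∧ (s : Set X).Pairwise (fun p q => r ≤ dist p q)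
  have hx1 : P {x} := ⟨Finset.mem_singleton_self x, by simpa using hx, by simp⟩
  obtain ⟨s, ⟨hxs, hsK, hsep⟩, hmax⟩ :=
    (measure fun s : Finset X => N - s.card).wf.has_min {s | P s} ⟨{x}, hx1⟩
  refine ⟨s, hxs, hsK, hsep, fun y hy => ?_⟩
  by_contra! hfar
  have hys : y ∉ s := fun hys => (hfar y hys).not_gt (by simpa using hr)
  -- `insert y s` would be a strictly larger admissible set
  have hins : P (insert y s) := by
    refine ⟨Finset.mem_insert_of_mem hxs, ?_, ?_⟩
    · simpa only [Finset.coe_insert] using Set.insert_subset hy hsK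
    · rw [Finset.coe_insert]
      exact hsep.insert fun p hp _ => ⟨hfar p hp, dist_comm y p ▸ hfar p hp⟩
  have := hN _ hins.2.1 hins.2.2
  rw [Finset.card_insert_of_notMem hys] at this
  exact hmax _ hins (show N - (insert y s).card < N - s.card by
    rw [Finset.card_insert_of_notMem hys]; omega)

theorem ball_div_subset_image_ball {X : Type*} [PseudoMetricSpace X] (φ : X ≃ X) {x : X}
    {μ δ : ℝ} (hμ : 1 ≤ μ) (hlip : ∀ y ∈ closedBall x δ, dist (φ.symm y) x ≤ μ * dist y x) :
    ball x (δ / μ) ⊆ φ '' ball x δ := by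
  intro z hz
  have hμ0 : 0 < μ := one_pos.trans_le hμ
  have hzx : dist z x < δ / μ := hz
  have hδ : 0 < δ := (div_pos_iff_of_pos_right hμ0).1 (dist_nonneg.trans_lt hzx)
  have hz' : z ∈ closedBall x δ := (le_of_lt hzx).trans (div_le_self hδ.le hμ)
  refine ⟨φ.symm z, ?_, φ.apply_symm_apply z⟩
  calc dist (φ.symm z) x ≤ μ * dist z x := hlip z hz'
    _ < μ * (δ / μ) := by gcongr
    _ = δ := mul_div_cancel₀ δ hμ0.ne'

theorem covering_property_blending_region_general
    (c : ℕ) (μ δ : ℝ) (hμ : 1 ≤ μ) (hδ : 0 < δ)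
    (φ : EuclideanSpace ℝ (Fin c) ≃ₜ EuclideanSpace ℝ (Fin c))
    (x : EuclideanSpace ℝ (Fin c)) (hx : φ x = x)
    (hlip : ∀ y ∈ closedBall x δ, ∀ y' ∈ closedBall x δ,
      ‖φ.symm y - φ.symm y'‖ ≤ μ * ‖y - y'‖) :
    ∃ (k : ℕ) (hk : 1 ≤ k) (v : Fin k → EuclideanSpace ℝ (Fin c)),
      (k : ℝ) ≤ (1 + 2 * μ) ^ c ∧
      v ⟨0, hk⟩ = 0 ∧
      (∀ i, ‖v i‖ ≤ δ) ∧
      closedBall x δ ⊆ ⋃ i, (fun y => v i + φ y) '' ball x δ := by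
  have hr : 0 < δ / μ := div_pos hδ (one_pos.trans_le hμ)
  have hxK : x ∈ closedBall x δ := mem_closedBall_self hδ.le
  have hball : ball x (δ / μ) ⊆ φ '' ball x δ := by
    refine ball_div_subset_image_ball φ.toEquiv hμ fun y hy => ?_
    have hxx : φ.symm x = x := φ.symm_apply_eq.2 hx.symm
    simpa [dist_eq_norm, hxx] using hlip y hy x hxK
  have hpack : ∀ s : Finset (EuclideanSpace ℝ (Fin c)),
      (s : Set (EuclideanSpace ℝ (Fin c))) ⊆ closedBall x δ →
      (s : Set (EuclideanSpace ℝ (Fin c))).Pairwise (fun p q => δ / μ ≤ dist p q) →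
      (s.card : ℝ) ≤ (1 + 2 * μ) ^ c := by
    intro s hs hsep
    have := s.card_le_of_pairwise_le_dist hδ.le hr hs hsep
    rwa [finrank_euclideanSpace_fin, mul_div_assoc, div_div_cancel₀ hδ.ne'] at this
  obtain ⟨s, hxs, hsK, hsep, hcover⟩ := exists_finset_maximal_separated hxK hr
    fun s hs hsep => Nat.le_floor (hpack s hs hsep)
  have hk : 1 ≤ s.card := Finset.card_pos.2 ⟨x, hxs⟩
  -- an enumeration of `s` starting at `x`
  let e : Fin s.card ≃ s :=
    s.equivFin.symm.trans (Equiv.swap (s.equivFin.symm ⟨0, hk⟩) ⟨x, hxs⟩)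
  refine ⟨s.card, hk, fun i => (e i : EuclideanSpace ℝ (Fin c)) - x, hpack s hsK hsep,
    by simp [e], fun i => ?_, fun y hy => ?_⟩
  · simpa [dist_eq_norm] using hsK (e i).2
  · obtain ⟨p, hp, hyp⟩ := hcover y hy
    obtain ⟨w, hw, hwy⟩ := hball (show y - (p - x) ∈ ball x (δ / μ) by
      rwa [mem_ball, dist_eq_norm, show y - (p - x) - x = y - p by abel, ← dist_eq_norm])
    refine mem_iUnion.2 ⟨e.symm ⟨p, hp⟩, w, hw, ?_⟩
    simp [hwy]

/-- **Covering property underlying blending regions.**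
If `φ` is a homeomorphism of `ℝ^c` fixing `x` whose inverse is `μ`-Lipschitz on the
closed `δ`-ball around `x`, then at most `(1 + 2μ)^c` translates of `φ(B)` (by vectors
of norm at most `δ`, the first one being zero) cover the closed `δ`-ball around `x`,
where `B` is the open `δ`-ball around `x`. -/
theorem covering_property_blending_region
    (c : ℕ) (hc : 1 ≤ c) (μ δ : ℝ) (hμ : 1 ≤ μ) (hδ : 0 < δ)
    (φ : EuclideanSpace ℝ (Fin c) ≃ₜ EuclideanSpace ℝ (Fin c))
    (x : EuclideanSpace ℝ (Fin c)) (hx : φ x = x)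
    (hlip : ∀ y ∈ closedBall x δ, ∀ y' ∈ closedBall x δ,
      ‖φ.symm y - φ.symm y'‖ ≤ μ * ‖y - y'‖) :
    ∃ (k : ℕ) (hk : 1 ≤ k) (v : Fin k → EuclideanSpace ℝ (Fin c)),
      (k : ℝ) ≤ (1 + 2 * μ) ^ c ∧
      v ⟨0, hk⟩ = 0 ∧
      (∀ i, ‖v i‖ ≤ δ) ∧
      closedBall x δ ⊆ ⋃ i, (fun y => v i + φ y) '' ball x δ :=
  covering_property_blending_region_general c μ δ hμ hδ φ x hx hlip
end

section
/- Let c ≥ 1, x ∈ ℝ^c, ε > 0, and let 0 < λ < 1 ≤ μ. Let φ : ℝ^c → ℝ^c be a homeomorphism with φ(x) = x such that μ⁻¹·‖a − b‖ ≤ ‖φ(a) − φ(b)‖ ≤ λ·‖a − b‖ for all a, b ∈ closedBall(x, 2ε). Then there exist δ with 0 < δ ≤ ε, an integer k with 1 ≤ k ≤ (1 + 2μ)^c, and vectors v_1, …, v_k ∈ ℝ^c with v_1 = 0 and ‖v_i‖ ≤ δ, such that the maps φ_i : ℝ^c → ℝ^c defined by φ_i(y) = v_i + φ(y) satisfy: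 (i) each φ_i is λ-Lipschitz on closedBall(x, 2ε) and maps closedBall(x, 2ε) into the open ball ball(x, 2ε); (ii) closedBall(x, δ) ⊆ ⋃_{i=1}^k φ_i(ball(x, δ)). (This is the construction of a contracting blending region from a hyperbolic attracting fixed point: finitely many translates of φ, by vectors of length at most δ, cover the δ-ball around x while all remaining contractions of the larger ball.) -/
/-!
Put `δ = ε(1 - λ)` and `r = δ / μ`. The lower bi-Lipschitz bound keeps `φ` of the sphere of
radius `δ` at distance `≥ r` from `x`; since `φ` is open and `φ(closedBall x δ)` is closed, the
connected ball `ball x r` then lies inside `φ(ball x δ)`. A maximal `r`-separated subset of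
`closedBall x δ` containing `x` is an `r`-net, and comparing the volume of the disjoint balls of
radius `r / 2` around its points with that of `closedBall x (δ + r / 2)` bounds its size by
`(1 + 2δ / r)^c = (1 + 2μ)^c`. The translates of `φ` by `p - x`, for `p` in the net, cover
`closedBall x δ`, and the choice of `δ` makes `δ + 2λε < 2ε`, so they map `closedBall x (2ε)`
into `ball x (2ε)`.
-/

open Metric Set MeasureTheory Module

theorem Finset.card_le_one_add_two_mul_div_pow_of_pairwise_le_dist
    {E : Type*} [NormedAddCommGroup E] [NormedSpace ℝ E] [FiniteDimensional ℝ E]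
    [MeasurableSpace E] [BorelSpace E] (μ : Measure E) [μ.IsAddHaarMeasure]
    {s : Finset E} {x : E} {R r : ℝ} (hR : 0 ≤ R) (hr : 0 < r)
    (hs : (s : Set E) ⊆ closedBall x R) (hsep : (s : Set E).Pairwise fun p q => r ≤ dist p q) :
    (s.card : ℝ) ≤ (1 + 2 * R / r) ^ finrank ℝ E := by
  set d := finrank ℝ E
  have hdisj : (s : Set E).PairwiseDisjoint fun p => ball p (r / 2) :=
    fun p hp q hq hpq => ball_disjoint_ball (by linarith [hsep hp hq hpq])
  have hsub : ⋃ p ∈ s, ball p (r / 2) ⊆ closedBall x (R + r / 2) :=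
    iUnion₂_subset fun p hp => ball_subset_closedBall.trans
      (closedBall_subset_closedBall' (by linarith [mem_closedBall.1 (hs hp)]))
  have hvol : (s.card : ENNReal) * (ENNReal.ofReal ((r / 2) ^ d) * μ (ball 0 1))
      ≤ ENNReal.ofReal ((R + r / 2) ^ d) * μ (ball 0 1) :=
    calc (s.card : ENNReal) * (ENNReal.ofReal ((r / 2) ^ d) * μ (ball 0 1))
        = μ (⋃ p ∈ s, ball p (r / 2)) := by
          rw [measure_biUnion_finset hdisj fun p _ => measurableSet_ball,
            Finset.sum_congr rfl fun p _ => Measure.addHaar_ball_of_pos μ p (half_pos hr),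
            Finset.sum_const, nsmul_eq_mul]
      _ ≤ μ (closedBall x (R + r / 2)) := measure_mono hsub
      _ = ENNReal.ofReal ((R + r / 2) ^ d) * μ (ball 0 1) :=
          Measure.addHaar_closedBall μ x (by positivity)
  rw [← mul_assoc, ENNReal.mul_le_mul_iff_left (measure_ball_pos μ 0 one_pos).ne'
    measure_ball_lt_top.ne, ← ENNReal.ofReal_natCast, ← ENNReal.ofReal_mul (by positivity),
    ENNReal.ofReal_le_ofReal_iff (by positivity), ← le_div_iff₀ (by positivity), ← div_pow] at hvol
  refine hvol.trans_eq (congrArg (· ^ d) ?_)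
  field_simp
  ring

theorem Finset.exists_maximal_of_card_le {α : Type*} {P : Finset α → Prop} {s₀ : Finset α}
    (h₀ : P s₀) {K : ℕ} (hK : ∀ s, P s → s.card ≤ K) : ∃ s, Maximal P s := by
  by_contra! h
  have hgrow : ∀ n : ℕ, ∃ s, P s ∧ n ≤ s.card := by
    intro n
    induction n with
    | zero => exact ⟨s₀, h₀, Nat.zero_le _⟩
    | succ n ih =>
      obtain ⟨s, hs, hn⟩ := ih
      obtain ⟨t, hst, ht⟩ := exists_gt_of_not_maximal hs (h s)
      exact ⟨t, ht, hn.trans_lt (Finset.card_lt_card hst)⟩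
  obtain ⟨s, hs, hK1⟩ := hgrow (K + 1)
  linarith [hK s hs]

theorem exists_finset_pairwise_le_dist_forall_dist_lt {X : Type*} [PseudoMetricSpace X]
    {A : Set X} {x : X} (hx : x ∈ A) {r : ℝ} (hr : 0 < r) {K : ℕ}
    (hK : ∀ s : Finset X, (s : Set X) ⊆ A → (s : Set X).Pairwise (fun p q => r ≤ dist p q) →
      s.card ≤ K) :
    ∃ s : Finset X, x ∈ s ∧ (s : Set X) ⊆ A ∧ (s : Set X).Pairwise (fun p q => r ≤ dist p q) ∧
      ∀ y ∈ A, ∃ p ∈ s, dist y p < r := by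
  classical
  obtain ⟨s, hmax⟩ := Finset.exists_maximal_of_card_le (s₀ := {x}) (K := K)
    (P := fun s => x ∈ s ∧ (s : Set X) ⊆ A ∧ (s : Set X).Pairwise fun p q => r ≤ dist p q)
    (by simpa using hx) fun s hs => hK s hs.2.1 hs.2.2
  obtain ⟨hxs, hsA, hsep⟩ := hmax.prop
  refine ⟨s, hxs, hsA, hsep, fun y hy => ?_⟩
  by_contra! hfar
  have hys : y ∉ s := fun hys => (hfar y hys).not_gt (by simpa using hr)
  refine hmax.not_prop_of_gt (Finset.ssubset_insert hys) ⟨Finset.mem_insert_of_mem hxs, ?_, ?_⟩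
  · simpa [Set.insert_subset_iff] using ⟨hy, hsA⟩
  · rw [Finset.coe_insert, Set.pairwise_insert]
    exact ⟨hsep, fun p hp _ => ⟨hfar p hp, dist_comm y p ▸ hfar p hp⟩⟩

theorem Homeomorph.ball_subset_image_ball {X Y : Type*} [PseudoMetricSpace X] [ProperSpace X]
    [NormedAddCommGroup Y] [NormedSpace ℝ Y] (φ : X ≃ₜ Y) {x : X} {δ r : ℝ} (hδ : 0 < δ)
    (hsphere : ∀ a ∈ sphere x δ, r ≤ dist (φ a) (φ x)) :
    ball (φ x) r ⊆ φ '' ball x δ := by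
  intro y hy
  have hclosed : IsClosed (φ '' closedBall x δ) :=
    ((isCompact_closedBall x δ).image φ.continuous).isClosed
  refine IsPreconnected.subset_left_of_subset_union (φ.isOpenMap _ isOpen_ball)
    hclosed.isOpen_compl (disjoint_compl_right.mono_left (image_mono ball_subset_closedBall)) ?_
    ⟨φ x, mem_ball_self (pos_of_mem_ball hy), x, mem_ball_self hδ, rfl⟩
    (convex_ball _ _).isPreconnected hy
  rintro z hz
  by_cases hzK : z ∈ φ '' closedBall x δ
  · obtain ⟨a, ha, rfl⟩ := hzK
    refine Or.inl ⟨a, ?_, rfl⟩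
    rcases (mem_closedBall.1 ha).lt_or_eq with h | h
    · exact h
    · exact absurd (hsphere a h) (not_le.2 (mem_ball.1 hz))
  · exact Or.inr hzK

theorem Finset.exists_fin_cons_range_eq {α : Type*} [DecidableEq α] {s : Finset α} {x : α}
    (hx : x ∈ s) :
    ∃ (n : ℕ) (f : Fin (n + 1) → α), f 0 = x ∧ Set.range f = s ∧ n + 1 = s.card :=
  ⟨_, Fin.cons x (Subtype.val ∘ (s.erase x).equivFin.symm), rfl, by
    rw [Fin.range_cons, (s.erase x).equivFin.symm.surjective.range_comp, Subtype.range_coe_subtype,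
      Finset.setOfPred_mem, ← Finset.coe_insert, Finset.insert_erase hx],
    Finset.card_erase_add_one hx⟩

theorem mapsTo_add_closedBall_ball {E : Type*} [SeminormedAddCommGroup E] {φ : E → E}
    {x v : E} {R lam : ℝ} (hlam : 0 ≤ lam)
    (hφ : ∀ a ∈ closedBall x R, ‖φ a - x‖ ≤ lam * ‖a - x‖) (hv : ‖v‖ + lam * R < R) :
    MapsTo (fun y => v + φ y) (closedBall x R) (ball x R) := fun a ha => by
  rw [mem_ball_iff_norm, add_sub_assoc]
  calc ‖v + (φ a - x)‖ ≤ ‖v‖ + lam * R := (norm_add_le _ _).trans (add_le_add le_rfl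
        ((hφ a ha).trans (mul_le_mul_of_nonneg_left (mem_closedBall_iff_norm.1 ha) hlam)))
    _ < R := hv

theorem subset_iUnion_image_add_of_forall_dist_lt {E ι : Type*} [SeminormedAddCommGroup E]
    {φ : E → E} {x : E} {r : ℝ} {A U : Set E} (f : ι → E)
    (hnet : ∀ y ∈ A, ∃ i, dist y (f i) < r) (hU : ball x r ⊆ φ '' U) :
    A ⊆ ⋃ i, (fun y => (f i - x) + φ y) '' U := fun y hy => by
  obtain ⟨i, hi⟩ := hnet y hy
  obtain ⟨z, hz, hφz⟩ := hU (show y - (f i - x) ∈ ball x r by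
    rwa [mem_ball_iff_norm, sub_sub, sub_add_cancel, ← dist_eq_norm])
  exact mem_iUnion.2 ⟨i, z, hz, by simp [hφz]⟩

theorem contracting_blending_region_from_fixed_point_general
    (c : ℕ) (x : EuclideanSpace ℝ (Fin c)) (ε lam μ : ℝ)
    (hε : 0 < ε) (hlam0 : 0 < lam) (hlam1 : lam < 1) (hμ : 1 ≤ μ)
    (φ : EuclideanSpace ℝ (Fin c) ≃ₜ EuclideanSpace ℝ (Fin c)) (hx : φ x = x)
    (hbilip : ∀ a ∈ closedBall x (2 * ε), ∀ b ∈ closedBall x (2 * ε),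
      μ⁻¹ * ‖a - b‖ ≤ ‖φ a - φ b‖ ∧ ‖φ a - φ b‖ ≤ lam * ‖a - b‖) :
    ∃ (δ : ℝ), 0 < δ ∧ δ ≤ ε ∧
    ∃ (k : ℕ) (hk : 1 ≤ k) (v : Fin k → EuclideanSpace ℝ (Fin c)),
      (k : ℝ) ≤ (1 + 2 * μ) ^ c ∧
      v ⟨0, hk⟩ = 0 ∧
      (∀ i, ‖v i‖ ≤ δ) ∧
      (∀ i, ∀ a ∈ closedBall x (2 * ε), ∀ b ∈ closedBall x (2 * ε),
        ‖(v i + φ a) - (v i + φ b)‖ ≤ lam * ‖a - b‖) ∧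
      (∀ i, MapsTo (fun y => v i + φ y) (closedBall x (2 * ε)) (ball x (2 * ε))) ∧
      closedBall x δ ⊆ ⋃ i, (fun y => v i + φ y) '' ball x δ := by
  set δ := ε * (1 - lam)
  have hδ : 0 < δ := mul_pos hε (by linarith)
  have hx2ε : x ∈ closedBall x (2 * ε) := mem_closedBall_self (by linarith)
  have hr : 0 < δ / μ := div_pos hδ (by linarith)
  have hcard : ∀ s : Finset (EuclideanSpace ℝ (Fin c)),
      (s : Set (EuclideanSpace ℝ (Fin c))) ⊆ closedBall x δ →
      (s : Set (EuclideanSpace ℝ (Fin c))).Pairwise (fun p q => δ / μ ≤ dist p q) →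
      (s.card : ℝ) ≤ (1 + 2 * μ) ^ c := fun s hs hsep => by
    have h := Finset.card_le_one_add_two_mul_div_pow_of_pairwise_le_dist volume hδ.le hr hs hsep
    rwa [finrank_euclideanSpace_fin, mul_div_assoc, div_div_cancel₀ hδ.ne'] at h
  obtain ⟨s, hxs, hsδ, hsep, hnet⟩ := exists_finset_pairwise_le_dist_forall_dist_lt
    (mem_closedBall_self hδ.le) hr fun s hs hsep => Nat.le_floor (hcard s hs hsep)
  have hlow : ∀ a ∈ sphere x δ, δ / μ ≤ dist (φ a) (φ x) := fun a ha => by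
    have h := (hbilip a (closedBall_subset_closedBall (by nlinarith)
      (sphere_subset_closedBall ha)) x hx2ε).1
    rwa [mem_sphere_iff_norm.1 ha, inv_mul_eq_div, ← dist_eq_norm] at h
  have hcover : ball x (δ / μ) ⊆ φ '' ball x δ := by
    simpa only [hx] using φ.ball_subset_image_ball hδ hlow
  obtain ⟨n, f, hf0, hrange, hn⟩ := s.exists_fin_cons_range_eq hxs
  have hfδ : ∀ i, ‖f i - x‖ ≤ δ := fun i =>
    mem_closedBall_iff_norm.1 (hsδ (hrange ▸ mem_range_self i))
  have hφ : ∀ a ∈ closedBall x (2 * ε), ‖φ a - x‖ ≤ lam * ‖a - x‖ := fun a ha => by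
    simpa only [hx] using (hbilip a ha x hx2ε).2
  refine ⟨δ, hδ, by nlinarith, n + 1, by omega, fun i => f i - x,
    by exact_mod_cast hn ▸ hcard s hsδ hsep, sub_eq_zero.2 hf0, hfδ,
    fun i a ha b hb => by simpa using (hbilip a ha b hb).2,
    fun i => mapsTo_add_closedBall_ball hlam0.le hφ (by nlinarith [hfδ i]),
    subset_iUnion_image_add_of_forall_dist_lt f
      (fun y hy => by simpa [← Finset.mem_coe, ← hrange] using hnet y hy) hcover⟩

/-- **Contracting blending region from a hyperbolic attracting fixed point.**
Given a homeomorphism `φ` of `ℝ^c` fixing `x`, which on the closed ball of radius `2ε`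
is a `λ`-contraction with bi-Lipschitz lower bound `μ⁻¹`, there are `δ ∈ (0, ε]` and at
most `(1+2μ)^c` translates `φ_i = v_i + φ` (with `v_1 = 0`, `‖v_i‖ ≤ δ`) which are
`λ`-Lipschitz on `closedBall x (2ε)`, map it into `ball x (2ε)`, and whose images of
`ball x δ` cover `closedBall x δ`. -/
theorem contracting_blending_region_from_fixed_point
    (c : ℕ) (hc : 1 ≤ c) (x : EuclideanSpace ℝ (Fin c)) (ε lam μ : ℝ)
    (hε : 0 < ε) (hlam0 : 0 < lam) (hlam1 : lam < 1) (hμ : 1 ≤ μ)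
    (φ : EuclideanSpace ℝ (Fin c) ≃ₜ EuclideanSpace ℝ (Fin c)) (hx : φ x = x)
    (hbilip : ∀ a ∈ closedBall x (2 * ε), ∀ b ∈ closedBall x (2 * ε),
      μ⁻¹ * ‖a - b‖ ≤ ‖φ a - φ b‖ ∧ ‖φ a - φ b‖ ≤ lam * ‖a - b‖) :
    ∃ (δ : ℝ), 0 < δ ∧ δ ≤ ε ∧
    ∃ (k : ℕ) (hk : 1 ≤ k) (v : Fin k → EuclideanSpace ℝ (Fin c)),
      (k : ℝ) ≤ (1 + 2 * μ) ^ c ∧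
      v ⟨0, hk⟩ = 0 ∧
      (∀ i, ‖v i‖ ≤ δ) ∧
      (∀ i, ∀ a ∈ closedBall x (2 * ε), ∀ b ∈ closedBall x (2 * ε),
        ‖(v i + φ a) - (v i + φ b)‖ ≤ lam * ‖a - b‖) ∧
      (∀ i, MapsTo (fun y => v i + φ y) (closedBall x (2 * ε)) (ball x (2 * ε))) ∧
      closedBall x δ ⊆ ⋃ i, (fun y => v i + φ y) '' ball x δ :=
  contracting_blending_region_from_fixed_point_general c x ε lam μ hε hlam0 hlam1 hμ φ hx hbilip
end

section
/- For every c ≥ 1 and every x ∈ ℝ^c there exist an integer k with 1 ≤ k ≤ 5^c and vectors u_1, …, u_k ∈ ℝ^c with u_1 = 0 and ‖u_i‖ ≤ 1 for all i, such that, defining for t ∈ [0, 1] the maps φ_i^t : ℝ^c → ℝ^c by φ_i^t(y) = x + t²·u_i + (1 − t/2)(y − x), the following hold: φ_i^0 is the identity map for every i; the map (t, y) ↦ φ_i^t(y) is continuous; and for every t ∈ (0, 1], each φ_i^t is a homeomorphism of ℝ^c which is (1 − t/2)-Lipschitz, maps closedBall(x, 3t) into ball(x, 3t), and closedBall(x,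 t²) ⊆ ⋃_{i=1}^k φ_i^t(ball(x, t²)). (This realizes, near any point x, arcs of maps unfolding from the identity that form a contracting blending region for every positive parameter t, with the number k of maps depending only on the dimension c.) -/
open Metric Set

lemma net_card_bound (c : ℕ) (s : Finset (EuclideanSpace ℝ (Fin c)))
    (h1 : ∀ v ∈ s, ‖v‖ ≤ 1)
    (h2 : ∀ v ∈ s, ∀ w ∈ s, v ≠ w → (1:ℝ)/2 ≤ ‖v - w‖) : s.card ≤ 5 ^ c := by
  classical
  have hinj : Function.Injective (fun v : EuclideanSpace ℝ (Fin c) => (2:ℝ) • v) := by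
    intro a b hab
    simpa using smul_right_injective (EuclideanSpace ℝ (Fin c)) (by norm_num : (2:ℝ) ≠ 0) hab
  have hcard : (s.image (fun v : EuclideanSpace ℝ (Fin c) => (2:ℝ) • v)).card = s.card :=
    Finset.card_image_of_injective _ hinj
  have := Besicovitch.card_le_of_separated (s.image (fun v : EuclideanSpace ℝ (Fin c) => (2:ℝ) • v))
    (by
      intro v hv
      obtain ⟨w, hw, rfl⟩ := Finset.mem_image.1 hv
      rw [norm_smul]
      simpa using by linarith [h1 w hw])
    (by
      intro v hv w hw hvw
      obtain ⟨a, ha, rfl⟩ := Finset.mem_image.1 hv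
      obtain ⟨b, hb, rfl⟩ := Finset.mem_image.1 hw
      have hab : a ≠ b := fun h => hvw (by rw [h])
      have := h2 a ha b hb hab
      rw [← smul_sub, norm_smul]
      simp only [Real.norm_ofNat]
      linarith)
  rw [hcard, finrank_euclideanSpace_fin] at this
  exact this

lemma exists_net (c : ℕ) :
    ∃ s : Finset (EuclideanSpace ℝ (Fin c)),
      (0 : EuclideanSpace ℝ (Fin c)) ∈ s ∧ (∀ v ∈ s, ‖v‖ ≤ 1) ∧ s.card ≤ 5 ^ c ∧
      ∀ z : EuclideanSpace ℝ (Fin c), ‖z‖ ≤ 1 → ∃ v ∈ s, ‖z - v‖ < 1/2 := by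
  classical
  set E := EuclideanSpace ℝ (Fin c)
  set P : Finset E → Prop := fun s => (0:E) ∈ s ∧ (∀ v ∈ s, ‖v‖ ≤ 1) ∧
    ∀ v ∈ s, ∀ w ∈ s, v ≠ w → (1:ℝ)/2 ≤ ‖v - w‖ with hP
  set A : Set ℕ := {n | ∃ s, P s ∧ s.card = n} with hAdef
  have hA1 : 1 ∈ A := by
    refine ⟨{0}, ⟨Finset.mem_singleton_self _, ?_, ?_⟩, Finset.card_singleton _⟩
    · intro v hv; rw [Finset.mem_singleton] at hv; simp [hv]
    · intro v hv w hw hvw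
      rw [Finset.mem_singleton] at hv hw
      exact absurd (hv.trans hw.symm) hvw
  have hAbdd : BddAbove A := ⟨5 ^ c, by
    rintro n ⟨s, hs, rfl⟩
    exact net_card_bound c s hs.2.1 hs.2.2⟩
  obtain ⟨s, hPs, hscard⟩ : ∃ s, P s ∧ s.card = sSup A := Nat.sSup_mem ⟨1, hA1⟩ hAbdd
  refine ⟨s, hPs.1, hPs.2.1, ?_, ?_⟩
  · rw [hscard]; exact csSup_le ⟨1, hA1⟩ (by rintro n ⟨t, ht, rfl⟩; exact net_card_bound c t ht.2.1 ht.2.2)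
  · intro z hz
    by_contra h
    push_neg at h
    have hzs : z ∉ s := by
      intro hzs
      have := h z hzs
      simp at this
      linarith
    have hins : P (insert z s) := by
      refine ⟨Finset.mem_insert_of_mem hPs.1, ?_, ?_⟩
      · intro v hv
        rcases Finset.mem_insert.1 hv with rfl | hv
        · exact hz
        · exact hPs.2.1 v hv
      · intro v hv w hw hvw
        rcases Finset.mem_insert.1 hv with hv0 | hv1 <;> rcases Finset.mem_insert.1 hw with hw0 | hw1
        · exact absurd (hv0.trans hw0.symm) hvw
        · rw [hv0]; exact h w hw1
        · rw [hw0, norm_sub_rev]; exact h v hv1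
        · exact hPs.2.2 v hv1 w hw1 hvw
    have hmem : s.card + 1 ∈ A := ⟨insert z s, hins, by rw [Finset.card_insert_of_notMem hzs]⟩
    have := le_csSup hAbdd hmem
    omega

/-- **Arcs of maps unfolding from the identity forming a contracting blending region.**
Near any point `x ∈ ℝ^c` there are at most `5^c` arcs of maps
`φ_i^t(y) = x + t² u_i + (1 - t/2)(y - x)` (with `u_1 = 0`, `‖u_i‖ ≤ 1`), equal to the
identity at `t = 0`, jointly continuous in `(t, y)`, and such that for every `t ∈ (0,1]`
each `φ_i^t` is a `(1 - t/2)`-Lipschitz homeomorphism of `ℝ^c` mapping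
`closedBall x (3t)` into `ball x (3t)`, while the images `φ_i^t(ball x t²)` cover
`closedBall x t²`. -/
theorem arcs_of_contracting_blending_region
    (c : ℕ) (hc : 1 ≤ c) (x : EuclideanSpace ℝ (Fin c)) :
    ∃ (k : ℕ) (hk : 1 ≤ k) (u : Fin k → EuclideanSpace ℝ (Fin c)),
      k ≤ 5 ^ c ∧
      u ⟨0, hk⟩ = 0 ∧
      (∀ i, ‖u i‖ ≤ 1) ∧
      (∀ i : Fin k, ∀ y, x + (0 : ℝ) ^ 2 • u i + (1 - (0 : ℝ) / 2) • (y - x) = y) ∧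
      (∀ i : Fin k, Continuous fun p : ℝ × EuclideanSpace ℝ (Fin c) =>
        x + p.1 ^ 2 • u i + (1 - p.1 / 2) • (p.2 - x)) ∧
      (∀ t ∈ Set.Ioc (0 : ℝ) 1, ∀ i : Fin k,
        IsHomeomorph (fun y => x + t ^ 2 • u i + (1 - t / 2) • (y - x)) ∧
        (∀ a b : EuclideanSpace ℝ (Fin c),
          ‖(x + t ^ 2 • u i + (1 - t / 2) • (a - x)) -
            (x + t ^ 2 • u i + (1 - t / 2) • (b - x))‖ ≤ (1 - t / 2) * ‖a - b‖) ∧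
        MapsTo (fun y => x + t ^ 2 • u i + (1 - t / 2) • (y - x))
          (closedBall x (3 * t)) (ball x (3 * t))) ∧
      (∀ t ∈ Set.Ioc (0 : ℝ) 1,
        closedBall x (t ^ 2) ⊆
          ⋃ i, (fun y => x + t ^ 2 • u i + (1 - t / 2) • (y - x)) '' ball x (t ^ 2)) := by
  classical
  obtain ⟨s, h0s, hnorm, hcard, hnet⟩ := exists_net c
  have hk : 1 ≤ s.card := Finset.card_pos.2 ⟨0, h0s⟩
  set k := s.card with hkdef
  let e : s ≃ Fin k := s.equivFin
  let i0 : Fin k := e ⟨0, h0s⟩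
  let u : Fin k → EuclideanSpace ℝ (Fin c) :=
    fun i => ((e.symm (Equiv.swap ⟨0, hk⟩ i0 i)) : EuclideanSpace ℝ (Fin c))
  have hu0 : u ⟨0, hk⟩ = 0 := by
    simp only [u, Equiv.swap_apply_left, i0, Equiv.symm_apply_apply]
  have humem : ∀ i, (u i) ∈ s := fun i => (e.symm _).2
  have hurange : ∀ v ∈ s, ∃ i, u i = v := by
    intro v hv
    refine ⟨Equiv.swap ⟨0, hk⟩ i0 (e ⟨v, hv⟩), ?_⟩
    simp only [u, Equiv.swap_apply_self, Equiv.symm_apply_apply]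
  refine ⟨k, hk, u, hcard, hu0, fun i => hnorm _ (humem i), ?_, ?_, ?_, ?_⟩
  · intro i y
    norm_num
  · intro i
    fun_prop
  · rintro t ⟨ht0, ht1⟩ i
    have hl0 : (0:ℝ) < 1 - t / 2 := by linarith
    have hlne : (1 - t / 2 : ℝ) ≠ 0 := ne_of_gt hl0
    refine ⟨?_, ?_, ?_⟩
    · have heq : (fun y => x + t ^ 2 • u i + (1 - t / 2) • (y - x)) =
          ⇑((Homeomorph.subRight x).trans (((Homeomorph.smulOfNeZero (1 - t/2) hlne).trans
            (Homeomorph.addLeft (x + t ^ 2 • u i))))) := by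
        funext y
        simp [Homeomorph.trans]
      rw [heq]
      exact Homeomorph.isHomeomorph _
    · intro a b
      have h1 : (x + t ^ 2 • u i + (1 - t / 2) • (a - x)) -
          (x + t ^ 2 • u i + (1 - t / 2) • (b - x)) = (1 - t / 2) • (a - b) := by
        module
      rw [h1, norm_smul, Real.norm_eq_abs, abs_of_nonneg hl0.le]
    · intro y hy
      rw [mem_closedBall, dist_eq_norm] at hy
      rw [mem_ball, dist_eq_norm]
      have h1 : (x + t ^ 2 • u i + (1 - t / 2) • (y - x)) - x
          = t ^ 2 • u i + (1 - t / 2) • (y - x) := by module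
      rw [h1]
      have h2 : ‖t ^ 2 • u i + (1 - t / 2) • (y - x)‖ ≤
          t ^ 2 * ‖u i‖ + (1 - t / 2) * ‖y - x‖ := by
        calc ‖t ^ 2 • u i + (1 - t / 2) • (y - x)‖
            ≤ ‖t ^ 2 • u i‖ + ‖(1 - t / 2) • (y - x)‖ := norm_add_le _ _
          _ = t ^ 2 * ‖u i‖ + (1 - t / 2) * ‖y - x‖ := by
              rw [norm_smul, norm_smul, Real.norm_eq_abs, Real.norm_eq_abs,
                abs_of_nonneg (sq_nonneg t), abs_of_nonneg hl0.le]
      have h3 := hnorm _ (humem i)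
      have h4 : ‖y - x‖ ≥ 0 := norm_nonneg _
      nlinarith [hy, h3, sq_nonneg t]
  · rintro t ⟨ht0, ht1⟩ z hz
    rw [mem_closedBall, dist_eq_norm] at hz
    have ht2 : (0:ℝ) < t ^ 2 := by positivity
    have hl0 : (0:ℝ) < 1 - t / 2 := by linarith
    set w : EuclideanSpace ℝ (Fin c) := (t ^ 2)⁻¹ • (z - x) with hwdef
    have hw1 : ‖w‖ ≤ 1 := by
      rw [hwdef, norm_smul, Real.norm_eq_abs, abs_of_nonneg (by positivity)]
      rw [inv_mul_le_iff₀ ht2]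
      linarith
    obtain ⟨v, hv, hv2⟩ := hnet w hw1
    obtain ⟨i, rfl⟩ := hurange v hv
    have hzw : z - x = t ^ 2 • w := by
      rw [hwdef, smul_inv_smul₀ (ne_of_gt ht2)]
    refine mem_iUnion.2 ⟨i, ⟨x + (1 - t/2)⁻¹ • (z - x - t ^ 2 • u i), ?_, ?_⟩⟩
    · rw [mem_ball, dist_eq_norm]
      have h1 : x + (1 - t/2)⁻¹ • (z - x - t ^ 2 • u i) - x
          = (1 - t/2)⁻¹ • (t ^ 2 • (w - u i)) := by
        rw [hzw]; module
      rw [h1, norm_smul, norm_smul, Real.norm_eq_abs, Real.norm_eq_abs,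
        abs_of_nonneg (inv_nonneg.2 hl0.le), abs_of_nonneg (sq_nonneg t)]
      rw [inv_mul_lt_iff₀ hl0]
      have : ‖w - u i‖ < 1 - t / 2 := lt_of_lt_of_le hv2 (by linarith)
      nlinarith [norm_nonneg (w - u i)]
    · show x + t ^ 2 • u i + (1 - t / 2) • ((x + (1 - t/2)⁻¹ • (z - x - t ^ 2 • u i)) - x) = z
      rw [add_sub_cancel_left, smul_inv_smul₀ (ne_of_gt hl0)]
      module
end

section
/- Let S be a finite nonempty set, let (X, d) be a metric space, K ⊆ X a nonempty compact subset, λ ∈ [0, 1), and for each i ∈ S let f_i : X → X satisfy f_i(K) ⊆ K and d(f_i(a), f_i(b)) ≤ λ·d(a, b) for all a, b ∈ K. Then there exists exactly one function g : Σ_S → K satisfying the equivariance relation g(τξ) = f_{ξ_0}(g(ξ)) for all ξ ∈ Σ_S, and this function g is continuous (Σ_S carrying the product topology). (The graph of g is the attracting invariant section of the one-step skew-product generated by the family (f_i)_{i∈S}.) -/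
/-! Invariant sections are exactly the fixed points of the graph transform
`g ↦ (ξ ↦ f_{ξ₋₁} (g (τ⁻¹ ξ)))`. On bounded continuous maps `Σ_S → K` with the sup metric the
graph transform is a `λ`-contraction, so Banach's fixed point theorem gives a continuous invariant
section. Two invariant sections, continuous or not, are at sup-distance at most `λⁿ · diam K`
for every `n` (unfold both `n` times along the same past), hence equal. -/

open Metric Set
open scoped NNReal BoundedContinuousFunction

section GraphTransform

variable {S Y : Type*}

def graphTransform (F : S → Y → Y) (g : (ℤ → S) → Y) : (ℤ → S) → Y :=
  fun ξ => F (ξ (-1)) (g fun i => ξ (i - 1))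

theorem graphTransform_eq_self_iff {F : S → Y → Y} {g : (ℤ → S) → Y} :
    graphTransform F g = g ↔ ∀ ξ : ℤ → S, g (fun i => ξ (i + 1)) = F (ξ 0) (g ξ) := by
  constructor
  · intro h ξ
    simpa only [graphTransform, sub_add_cancel, neg_add_cancel] using
      congrFun h.symm fun i => ξ (i + 1)
  · intro h
    funext ξ
    simpa only [graphTransform, add_sub_cancel_right, zero_sub] using (h fun i => ξ (i - 1)).symm

section Uniqueness

variable [MetricSpace Y] {F : S → Y → Y} {lam : ℝ≥0} {g g' : (ℤ → S) → Y}

theorem dist_le_pow_mul_of_graphTransform_eq_self (hF : ∀ i, LipschitzWith lam (F i))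
    (hg : graphTransform F g = g) (hg' : graphTransform F g' = g') {C : ℝ}
    (hC : ∀ ξ, dist (g ξ) (g' ξ) ≤ C) (n : ℕ) (ξ : ℤ → S) :
    dist (g ξ) (g' ξ) ≤ lam ^ n * C := by
  induction n generalizing ξ with
  | zero => simpa using hC ξ
  | succ n ih =>
    calc dist (g ξ) (g' ξ) = dist (graphTransform F g ξ) (graphTransform F g' ξ) := by
          rw [hg, hg']
      _ ≤ lam * dist (g fun i => ξ (i - 1)) (g' fun i => ξ (i - 1)) := (hF _).dist_le_mul _ _
      _ ≤ lam * (lam ^ n * C) := by gcongr; exact ih _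
      _ = lam ^ (n + 1) * C := by ring

theorem graphTransform_eq_self_unique [BoundedSpace Y] (hF : ∀ i, LipschitzWith lam (F i))
    (hlam : lam < 1) (hg : graphTransform F g = g) (hg' : graphTransform F g' = g') :
    g = g' := by
  obtain ⟨C, hC⟩ := boundedSpace_iff.mp ‹BoundedSpace Y›
  have hpow : Filter.Tendsto (fun n : ℕ => (lam : ℝ) ^ n * C) Filter.atTop (nhds 0) := by
    simpa using (tendsto_pow_atTop_nhds_zero_of_lt_one lam.2 hlam).mul_const C
  funext ξ
  exact dist_le_zero.mp <| ge_of_tendsto' hpow fun n =>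
    dist_le_pow_mul_of_graphTransform_eq_self hF hg hg' (fun ξ => hC _ _) n ξ

end Uniqueness

section Existence

variable [TopologicalSpace S] [DiscreteTopology S]

theorem continuous_graphTransform [TopologicalSpace Y] {F : S → Y → Y}
    (hF : ∀ i, Continuous (F i)) {g : (ℤ → S) → Y} (hg : Continuous g) :
    Continuous (graphTransform F g) :=
  show Continuous ((fun p : S × Y => F p.1 p.2) ∘
      fun ξ : ℤ → S => (ξ (-1), g fun i => ξ (i - 1))) from
  (continuous_prod_of_discrete_left.mpr hF).comp <|
    (continuous_apply _).prodMk (hg.comp <| continuous_pi fun _ => continuous_apply _)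

variable [MetricSpace Y] [BoundedSpace Y] {F : S → Y → Y}

noncomputable def boundedGraphTransform (hF : ∀ i, Continuous (F i)) (g : (ℤ → S) →ᵇ Y) :
    (ℤ → S) →ᵇ Y :=
  .mkOfBound ⟨graphTransform F g, continuous_graphTransform hF g.continuous⟩ (diam (univ : Set Y))
    fun _ _ => dist_le_diam_of_mem (Bornology.isBounded_univ.mpr ‹_›) trivial trivial

theorem contractingWith_boundedGraphTransform {lam : ℝ≥0} (hF : ∀ i, LipschitzWith lam (F i))
    (hlam : lam < 1) :
    ContractingWith lam (boundedGraphTransform fun i => (hF i).continuous) := by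
  refine ⟨hlam, LipschitzWith.of_dist_le_mul fun g g' =>
    (BoundedContinuousFunction.dist_le (by positivity)).mpr fun ξ => ?_⟩
  exact ((hF _).dist_le_mul _ _).trans <|
    mul_le_mul_of_nonneg_left (BoundedContinuousFunction.dist_coe_le_dist _) lam.2

theorem exists_continuous_graphTransform_eq_self [Nonempty Y] [CompleteSpace Y] {lam : ℝ≥0}
    (hF : ∀ i, LipschitzWith lam (F i)) (hlam : lam < 1) :
    ∃ g : (ℤ → S) → Y, Continuous g ∧ graphTransform F g = g :=
  have : Nonempty ((ℤ → S) →ᵇ Y) := .map (BoundedContinuousFunction.const _) ‹_›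
  have hT := contractingWith_boundedGraphTransform hF hlam
  ⟨hT.fixedPoint, hT.fixedPoint.continuous, congrArg DFunLike.coe hT.fixedPoint_isFixedPt⟩

end Existence

end GraphTransform

theorem attracting_invariant_section_general
    {S : Type*} [TopologicalSpace S] [DiscreteTopology S]
    {X : Type*} [MetricSpace X] (K : Set X) (hK : K.Nonempty) (hKc : IsCompact K)
    (lam : ℝ) (hlam1 : lam < 1)
    (f : S → X → X) (hmaps : ∀ i, MapsTo (f i) K K)
    (hlip : ∀ i, ∀ a ∈ K, ∀ b ∈ K, dist (f i a) (f i b) ≤ lam * dist a b) :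
    ∃ g : (ℤ → S) → X,
      ((∀ ξ, g ξ ∈ K) ∧ ∀ ξ : ℤ → S, g (fun i => ξ (i + 1)) = f (ξ 0) (g ξ)) ∧
      Continuous g ∧
      ∀ g' : (ℤ → S) → X,
        ((∀ ξ, g' ξ ∈ K) ∧ ∀ ξ : ℤ → S, g' (fun i => ξ (i + 1)) = f (ξ 0) (g' ξ)) →
        g' = g := by
  have : CompactSpace K := isCompact_iff_compactSpace.mp hKc
  have : Nonempty K := hK.to_subtype
  have hF (i : S) : LipschitzWith lam.toNNReal ((hmaps i).restrict) :=
    LipschitzWith.of_dist_le' fun a b => hlip i a a.2 b b.2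
  have hlam : lam.toNNReal < 1 := Real.toNNReal_lt_one.mpr hlam1
  obtain ⟨g, hg_cont, hg⟩ := exists_continuous_graphTransform_eq_self hF hlam
  refine ⟨fun ξ => g ξ, ⟨fun ξ => (g ξ).2, fun ξ => congrArg Subtype.val
    (graphTransform_eq_self_iff.mp hg ξ)⟩, continuous_subtype_val.comp hg_cont, ?_⟩
  rintro g' ⟨hg'K, hg'⟩
  have hg'_fixed : graphTransform (fun i => (hmaps i).restrict) (fun ξ => ⟨g' ξ, hg'K ξ⟩) =
      fun ξ => ⟨g' ξ, hg'K ξ⟩ :=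
    graphTransform_eq_self_iff.mpr fun ξ => Subtype.ext (hg' ξ)
  funext ξ
  exact congrArg Subtype.val (congrFun (graphTransform_eq_self_unique hF hlam hg'_fixed hg) ξ)

/-- **Attracting invariant section of a one-step skew-product.**
If each `f i` maps the nonempty compact set `K` into itself and is a `λ`-contraction on
`K` (`0 ≤ λ < 1`), then there is exactly one function `g : Σ_S → K` with
`g(τξ) = f_{ξ₀}(g(ξ))` for all bi-infinite sequences `ξ`, and this `g` is continuous. -/
theorem attracting_invariant_section
    {S : Type*} [Fintype S] [Nonempty S] [TopologicalSpace S] [DiscreteTopology S]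
    {X : Type*} [MetricSpace X] (K : Set X) (hK : K.Nonempty) (hKc : IsCompact K)
    (lam : ℝ) (hlam0 : 0 ≤ lam) (hlam1 : lam < 1)
    (f : S → X → X) (hmaps : ∀ i, MapsTo (f i) K K)
    (hlip : ∀ i, ∀ a ∈ K, ∀ b ∈ K, dist (f i a) (f i b) ≤ lam * dist a b) :
    ∃ g : (ℤ → S) → X,
      ((∀ ξ, g ξ ∈ K) ∧ ∀ ξ : ℤ → S, g (fun i => ξ (i + 1)) = f (ξ 0) (g ξ)) ∧
      Continuous g ∧
      ∀ g' : (ℤ → S) → X,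
        ((∀ ξ, g' ξ ∈ K) ∧ ∀ ξ : ℤ → S, g' (fun i => ξ (i + 1)) = f (ξ 0) (g' ξ)) →
        g' = g :=
  attracting_invariant_section_general K hK hKc lam hlam1 f hmaps hlip
end

section
/- Let S be a finite nonempty set, let (X, d) be a metric space, K ⊆ X a nonempty compact subset, λ ∈ [0, 1), and for each i ∈ S let f_i : X → X satisfy f_i(K) ⊆ K and d(f_i(a), f_i(b)) ≤ λ·d(a, b) for all a, b ∈ K. Let Φ be the associated one-step skew-product and let g : Σ_S → K be the unique function with g(τξ) = f_{ξ_0}(g(ξ)) for all ξ. Then the maximal invariant set of Φ in Σ_S × K equals the graph of g: ⋂_{n≥0} Φ^n(Σ_S × K) = { (ξ, g(ξ)) : ξ ∈ Σ_S }, where Φ^n(Σ_S × K) denotes the image of Σ_S × K under the n-th iterate of Φ. -/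
open Metric Set

/-- The one-step skew-product `Φ(ξ, x) = (τξ, f_{ξ₀}(x))` on `Σ_S × X`. -/
def oneStepMap {S X : Type*} (f : S → X → X) : (ℤ → S) × X → (ℤ → S) × X :=
  fun p => ((fun i => p.1 (i + 1)), f (p.1 0) p.2)

lemma oneStepMap_iter_fst {S X : Type*} (f : S → X → X) :
    ∀ (n : ℕ) (p : (ℤ → S) × X), ((oneStepMap f)^[n] p).1 = fun i => p.1 (i + n) := by
  intro n
  induction n with
  | zero => intro p; simp
  | succ n ih =>
    intro p
    rw [Function.iterate_succ_apply', oneStepMap, ih p]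
    funext i
    simp only
    congr 1
    push_cast
    ring

lemma oneStepMap_iter_mem {S X : Type*} (f : S → X → X) (K : Set X)
    (hmaps : ∀ i, Set.MapsTo (f i) K K) :
    ∀ (n : ℕ) (p : (ℤ → S) × X), p.2 ∈ K → ((oneStepMap f)^[n] p).2 ∈ K := by
  intro n
  induction n with
  | zero => intro p hp; simpa using hp
  | succ n ih =>
    intro p hp
    rw [Function.iterate_succ_apply']
    exact hmaps _ (ih p hp)

lemma oneStepMap_iter_graph {S X : Type*} (f : S → X → X)
    (g : (ℤ → S) → X)
    (hg : ∀ ξ : ℤ → S, g (fun i => ξ (i + 1)) = f (ξ 0) (g ξ)) :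
    ∀ (n : ℕ) (η : ℤ → S),
      (oneStepMap f)^[n] (η, g η) = ((fun i => η (i + n)), g (fun i => η (i + n))) := by
  intro n
  induction n with
  | zero => intro η; simp
  | succ n ih =>
    intro η
    rw [Function.iterate_succ_apply', ih η, oneStepMap]
    have h1 : (fun i : ℤ => η (i + ((n + 1 : ℕ) : ℤ))) = fun i : ℤ => η (i + 1 + n) := by
      funext i; congr 1; push_cast; ring
    rw [h1]
    exact congrArg₂ Prod.mk rfl (hg fun i => η (i + n)).symm

lemma oneStepMap_iter_dist {X : Type*} [MetricSpace X] {S : Type*} (f : S → X → X)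
    (K : Set X) (lam : ℝ) (hlam0 : 0 ≤ lam)
    (hmaps : ∀ i, Set.MapsTo (f i) K K)
    (hlip : ∀ i, ∀ a ∈ K, ∀ b ∈ K, dist (f i a) (f i b) ≤ lam * dist a b) :
    ∀ (n : ℕ) (η : ℤ → S) (y : X), y ∈ K → ∀ z ∈ K,
      dist ((oneStepMap f)^[n] (η, y)).2 ((oneStepMap f)^[n] (η, z)).2
        ≤ lam ^ n * dist y z := by
  intro n
  induction n with
  | zero => intro η y hy z hz; simp
  | succ n ih =>
    intro η y hy z hz
    rw [Function.iterate_succ_apply, Function.iterate_succ_apply]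
    have h1 : dist ((oneStepMap f)^[n] ((fun i => η (i + 1)), f (η 0) y)).2
        ((oneStepMap f)^[n] ((fun i => η (i + 1)), f (η 0) z)).2
        ≤ lam ^ n * dist (f (η 0) y) (f (η 0) z) :=
      ih _ _ (hmaps _ hy) _ (hmaps _ hz)
    refine h1.trans ?_
    calc lam ^ n * dist (f (η 0) y) (f (η 0) z)
        ≤ lam ^ n * (lam * dist y z) := by
          exact mul_le_mul_of_nonneg_left (hlip _ _ hy _ hz) (pow_nonneg hlam0 n)
      _ = lam ^ (n + 1) * dist y z := by ring

/-- **The maximal invariant set in `Σ_S × K` is the invariant graph.**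
If each `f i` maps the nonempty compact `K` into itself as a `λ`-contraction and `g` is
the invariant section (`g(τξ) = f_{ξ₀}(g ξ)`, with values in `K`), then
`⋂_{n ≥ 0} Φⁿ(Σ_S × K) = {(ξ, g ξ) : ξ ∈ Σ_S}`. -/
theorem maximal_invariant_set_eq_graph
    {S : Type*} [Fintype S] [Nonempty S]
    {X : Type*} [MetricSpace X] (K : Set X) (hK : K.Nonempty) (hKc : IsCompact K)
    (lam : ℝ) (hlam0 : 0 ≤ lam) (hlam1 : lam < 1)
    (f : S → X → X) (hmaps : ∀ i, MapsTo (f i) K K)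
    (hlip : ∀ i, ∀ a ∈ K, ∀ b ∈ K, dist (f i a) (f i b) ≤ lam * dist a b)
    (g : (ℤ → S) → X) (hgK : ∀ ξ, g ξ ∈ K)
    (hg : ∀ ξ : ℤ → S, g (fun i => ξ (i + 1)) = f (ξ 0) (g ξ)) :
    ⋂ n : ℕ, (oneStepMap f)^[n] '' (Set.univ ×ˢ K) =
      Set.range fun ξ : ℤ → S => (ξ, g ξ) := by
  have hbdd := hKc.isBounded
  obtain ⟨D, hD⟩ : ∃ D : ℝ, ∀ a ∈ K, ∀ b ∈ K, dist a b ≤ D := by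
    rcases hbdd.subset_closedBall hK.choose with ⟨r, hr⟩
    exact ⟨2 * r, fun a ha b hb => by
      have h1 := hr ha; have h2 := hr hb
      simp only [mem_closedBall] at h1 h2
      calc dist a b ≤ dist a hK.choose + dist hK.choose b := dist_triangle _ _ _
        _ ≤ r + r := add_le_add h1 (by rwa [dist_comm])
        _ = 2 * r := by ring⟩
  ext ⟨ξ, x⟩
  simp only [Set.mem_iInter, Set.mem_image, Set.mem_range]
  constructor
  · intro h
    have key : ∀ n : ℕ, dist x (g ξ) ≤ lam ^ n * D := by
      intro n
      obtain ⟨p, hp, hpn⟩ := h n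
      have hp2 : p.2 ∈ K := hp.2
      have hfst : (fun i => p.1 (i + n)) = ξ := by
        rw [← oneStepMap_iter_fst f n p, hpn]
      have hgraph := oneStepMap_iter_graph f g hg n p.1
      have hx : ((oneStepMap f)^[n] (p.1, p.2)).2 = x := by rw [hpn]
      have hd := oneStepMap_iter_dist f K lam hlam0 hmaps hlip n p.1 p.2 hp2 (g p.1) (hgK p.1)
      rw [hx, hgraph] at hd
      simp only [hfst] at hd
      exact hd.trans (mul_le_mul_of_nonneg_left (hD _ hp2 _ (hgK p.1)) (pow_nonneg hlam0 n))
    have hx0 : dist x (g ξ) ≤ 0 := by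
      have htend : Filter.Tendsto (fun n : ℕ => lam ^ n * D) Filter.atTop (nhds 0) := by
        have := (tendsto_pow_atTop_nhds_zero_of_lt_one hlam0 hlam1).mul_const D
        simpa using this
      exact ge_of_tendsto htend (Filter.Eventually.of_forall key)
    have : x = g ξ := by
      have := dist_le_zero.mp hx0
      exact this
    exact ⟨ξ, by rw [this]⟩
  · rintro ⟨η, hη⟩
    obtain ⟨rfl, rfl⟩ : η = ξ ∧ g η = x := by
      have h1 := congrArg Prod.fst hη
      have h2 := congrArg Prod.snd hη
      exact ⟨h1, h2⟩
    intro n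
    refine ⟨((fun i => η (i - n)), g (fun i => η (i - n))), ⟨trivial, hgK _⟩, ?_⟩
    rw [oneStepMap_iter_graph f g hg n]
    have h2 : (fun i : ℤ => η (i + n - n)) = η := by funext i; congr 1; ring
    exact congrArg₂ Prod.mk h2 (congrArg g h2)
end

section
/- Let S be a finite nonempty set, let (X, d) be a metric space, K ⊆ X a nonempty compact subset, λ ∈ [0, 1), and for each i ∈ S let f_i : X → X satisfy f_i(K) ⊆ K and d(f_i(a), f_i(b)) ≤ λ·d(a, b) for all a, b ∈ K. Let Φ be the associated one-step skew-product, let g : Σ_S → K be the unique continuous function with g(τξ) = f_{ξ_0}(g(ξ)) for all ξ, and let Γ = { (ξ, g(ξ)) : ξ ∈ Σ_S } ⊆ Σ_S × X be its graph. Then the map h : Σ_S → Σ_S × X, h(ξ) = (ξ, g(ξ)), is a homeomorphism from Σ_S onto Γ (with the subspace topology of the product Σ_S × X) satisfying Φ ∘ h = h ∘ τ. In particular Γ is invariant under Φ and the restriction of Φ to Γ is topologically conjugate to the full shift τ on Σ_S. -/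
open Metric Set

/-- **The dynamics on the invariant graph is conjugate to the full shift.**
With `g` the continuous invariant section (values in the nonempty compact `K`,
`g(τξ) = f_{ξ₀}(g ξ)`) and `Γ = {(ξ, g ξ)}` its graph, the map `h(ξ) = (ξ, g ξ)` is a
homeomorphism from `Σ_S` onto `Γ` satisfying `Φ ∘ h = h ∘ τ`; in particular
`Φ(Γ) = Γ` and `Φ|_Γ` is topologically conjugate to the shift `τ`. -/
theorem graph_conjugate_to_full_shift
    {S : Type*} [Fintype S] [Nonempty S] [TopologicalSpace S] [DiscreteTopology S]
    {X : Type*} [MetricSpace X] (K : Set X) (hK : K.Nonempty) (hKc : IsCompact K)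
    (lam : ℝ) (hlam0 : 0 ≤ lam) (hlam1 : lam < 1)
    (f : S → X → X) (hmaps : ∀ i, MapsTo (f i) K K)
    (hlip : ∀ i, ∀ a ∈ K, ∀ b ∈ K, dist (f i a) (f i b) ≤ lam * dist a b)
    (g : (ℤ → S) → X) (hgK : ∀ ξ, g ξ ∈ K) (hgcont : Continuous g)
    (hg : ∀ ξ : ℤ → S, g (fun i => ξ (i + 1)) = f (ξ 0) (g ξ)) :
    (∃ e : (ℤ → S) ≃ₜ (Set.range fun ξ : ℤ → S => (ξ, g ξ)),
      ∀ ξ : ℤ → S, (e ξ : (ℤ → S) × X) = (ξ, g ξ)) ∧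
    (∀ ξ : ℤ → S, oneStepMap f (ξ, g ξ) =
      ((fun i => ξ (i + 1)), g fun i => ξ (i + 1))) ∧
    oneStepMap f '' (Set.range fun ξ : ℤ → S => (ξ, g ξ)) =
      Set.range fun ξ : ℤ → S => (ξ, g ξ) := by
  refine ⟨?_, ?_, ?_⟩
  · refine ⟨{ toFun := fun ξ => ⟨(ξ, g ξ), ⟨ξ, rfl⟩⟩
              invFun := fun p => (p : (ℤ → S) × X).1
              left_inv := fun ξ => rfl
              right_inv := ?_
              continuous_toFun := ?_
              continuous_invFun := ?_ }, fun ξ => rfl⟩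
    · rintro ⟨p, ξ, rfl⟩; rfl
    · exact Continuous.subtype_mk (continuous_id.prodMk hgcont) _
    · exact continuous_fst.comp continuous_subtype_val
  · intro ξ
    simp [oneStepMap, hg ξ]
  · ext p
    constructor
    · rintro ⟨q, ⟨ξ, rfl⟩, rfl⟩
      exact ⟨fun i => ξ (i + 1), by simp [oneStepMap, hg ξ]⟩
    · rintro ⟨ξ, rfl⟩
      refine ⟨(fun i => ξ (i - 1), g fun i => ξ (i - 1)), ⟨_, rfl⟩, ?_⟩
      have h1 : (fun i => ξ (i - 1 + 1)) = ξ := by funext i; simp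
      simp only [oneStepMap]
      rw [← hg (fun i => ξ (i - 1))]
      simp [h1]
end

section
/- Let S be a finite nonempty set, let (X, d) be a metric space, K ⊆ X a nonempty compact subset, λ ∈ [0, 1), and for each i ∈ S let h_i : X → X be a homeomorphism such that h_i⁻¹(K) ⊆ K and d(h_i⁻¹(a), h_i⁻¹(b)) ≤ λ·d(a, b) for all a, b ∈ K. Then there exists exactly one function g : Σ_S → K satisfying g(τξ) = h_{ξ_0}(g(ξ)) for all ξ ∈ Σ_S; this g is continuous, and g(ξ) depends only on the forward coordinates (ξ_i)_{i≥0}, i.e. if ξ_i = ζ_i for all i ≥ 0 then g(ξ) = g(ζ). (The graph of g is the repelling invariant section of the one-step skew-product generated by (h_i)_{i∈S}.) -/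
open Metric Set Filter Topology

/-- On a product with a discrete first factor, a family of continuous maps gives a
continuous uncurried map. -/
lemma discrete_uncurry_continuous {S X Y : Type*} [TopologicalSpace S] [DiscreteTopology S]
    [TopologicalSpace X] [TopologicalSpace Y] {u : S → X → Y} (hu : ∀ i, Continuous (u i)) :
    Continuous fun p : S × X => u p.1 p.2 := by
  rw [continuous_iff_continuousAt]
  rintro ⟨i, x⟩
  have hev : ∀ᶠ p : S × X in 𝓝 (i, x), p.1 = i := by
    have hopen : IsOpen {p : S × X | p.1 = i} := by
      have : {p : S × X | p.1 = i} = Prod.fst ⁻¹' {i} := rfl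
      rw [this]
      exact (isOpen_discrete {i}).preimage continuous_fst
    exact hopen.mem_nhds rfl
  have hca : ContinuousAt (fun p : S × X => u i p.2) (i, x) :=
    ((hu i).comp continuous_snd).continuousAt
  exact hca.congr (hev.mono fun p hp => by simp [hp])

/-- Key contraction estimate: if `g₁, g₂` are `K`-valued solutions of the functional
equation and `ξ, ζ` agree on coordinates `0 ≤ i < n`, then
`dist (g₁ ξ) (g₂ ζ) ≤ lam ^ n * diam K`. -/
lemma repelling_key {S X : Type*} [MetricSpace X] (K : Set X) (hKc : IsCompact K)
    (lam : ℝ) (hlam0 : 0 ≤ lam)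
    (h : S → X ≃ₜ X)
    (hlip : ∀ i, ∀ a ∈ K, ∀ b ∈ K,
      dist ((h i).symm a) ((h i).symm b) ≤ lam * dist a b)
    (g₁ g₂ : (ℤ → S) → X) (hg₁K : ∀ ξ, g₁ ξ ∈ K) (hg₂K : ∀ ξ, g₂ ξ ∈ K)
    (he₁ : ∀ ξ : ℤ → S, g₁ (fun i => ξ (i + 1)) = h (ξ 0) (g₁ ξ))
    (he₂ : ∀ ξ : ℤ → S, g₂ (fun i => ξ (i + 1)) = h (ξ 0) (g₂ ξ)) :
    ∀ n : ℕ, ∀ ξ ζ : ℤ → S, (∀ i : ℤ, 0 ≤ i → i < (n : ℤ) → ξ i = ζ i) →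
      dist (g₁ ξ) (g₂ ζ) ≤ lam ^ n * Metric.diam K := by
  intro n
  induction n with
  | zero =>
    intro ξ ζ _
    simpa using dist_le_diam_of_mem hKc.isBounded (hg₁K ξ) (hg₂K ζ)
  | succ n ih =>
    intro ξ ζ hagree
    have h0 : ξ 0 = ζ 0 := hagree 0 le_rfl (by positivity)
    have hξ : g₁ ξ = (h (ξ 0)).symm (g₁ (fun i => ξ (i + 1))) := by
      rw [he₁ ξ, Homeomorph.symm_apply_apply]
    have hζ : g₂ ζ = (h (ξ 0)).symm (g₂ (fun i => ζ (i + 1))) := by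
      rw [h0, he₂ ζ, Homeomorph.symm_apply_apply]
    have hstep : dist (g₁ ξ) (g₂ ζ) ≤
        lam * dist (g₁ (fun i => ξ (i + 1))) (g₂ (fun i => ζ (i + 1))) := by
      rw [hξ, hζ]
      exact hlip (ξ 0) _ (hg₁K _) _ (hg₂K _)
    have hih : dist (g₁ (fun i => ξ (i + 1))) (g₂ (fun i => ζ (i + 1))) ≤
        lam ^ n * Metric.diam K := by
      apply ih
      intro i hi hin
      exact hagree (i + 1) (by omega) (by push_cast; omega)
    calc dist (g₁ ξ) (g₂ ζ) ≤ lam * (lam ^ n * Metric.diam K) :=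
          hstep.trans (mul_le_mul_of_nonneg_left hih hlam0)
      _ = lam ^ (n + 1) * Metric.diam K := by ring

/-- **Repelling invariant section of a one-step skew-product.**
If each `h i` is a homeomorphism of `X` whose inverse maps the nonempty compact `K`
into itself as a `λ`-contraction on `K`, then there is exactly one function
`g : Σ_S → K` with `g(τξ) = h_{ξ₀}(g ξ)`; this `g` is continuous and depends only on
the forward coordinates `(ξ_i)_{i ≥ 0}`. -/
theorem repelling_invariant_section
    {S : Type*} [Fintype S] [Nonempty S] [TopologicalSpace S] [DiscreteTopology S]
    {X : Type*} [MetricSpace X] (K : Set X) (hK : K.Nonempty) (hKc : IsCompact K)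
    (lam : ℝ) (hlam0 : 0 ≤ lam) (hlam1 : lam < 1)
    (h : S → X ≃ₜ X) (hmaps : ∀ i, (h i).symm '' K ⊆ K)
    (hlip : ∀ i, ∀ a ∈ K, ∀ b ∈ K,
      dist ((h i).symm a) ((h i).symm b) ≤ lam * dist a b) :
    ∃ g : (ℤ → S) → X,
      ((∀ ξ, g ξ ∈ K) ∧ ∀ ξ : ℤ → S, g (fun i => ξ (i + 1)) = h (ξ 0) (g ξ)) ∧
      Continuous g ∧
      (∀ ξ ζ : ℤ → S, (∀ i : ℤ, 0 ≤ i → ξ i = ζ i) → g ξ = g ζ) ∧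
      ∀ g' : (ℤ → S) → X,
        ((∀ ξ, g' ξ ∈ K) ∧ ∀ ξ : ℤ → S, g' (fun i => ξ (i + 1)) = h (ξ 0) (g' ξ)) →
        g' = g := by
  classical
  haveI : CompactSpace ↥K := isCompact_iff_compactSpace.mp hKc
  haveI : Nonempty ↥K := hK.to_subtype
  -- the map on `K` induced by `(h i).symm`
  have hmem : ∀ i, ∀ x : ↥K, (h i).symm (x : X) ∈ K := fun i x =>
    hmaps i ⟨(x : X), x.2, rfl⟩
  set Φ : C(ℤ → S, ↥K) → C(ℤ → S, ↥K) := fun g =>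
    ⟨fun ξ => ⟨(h (ξ 0)).symm (g (fun i => ξ (i + 1)) : X), hmem _ _⟩, by
      apply Continuous.subtype_mk
      have hc1 : Continuous fun p : S × X => (h p.1).symm p.2 :=
        discrete_uncurry_continuous fun i => (h i).symm.continuous
      have hc2 : Continuous fun ξ : ℤ → S => ((ξ 0 : S),
          ((g (fun i => ξ (i + 1)) : X))) := by
        apply Continuous.prodMk (continuous_apply 0)
        exact continuous_subtype_val.comp <| g.continuous.comp <| by
          exact continuous_pi fun i => continuous_apply (i + 1)
      exact hc1.comp hc2⟩ with hΦ
  haveI : Nonempty C(ℤ → S, ↥K) := ⟨ContinuousMap.const _ (Classical.arbitrary _)⟩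
  -- `Φ` is a contraction
  have hcontr : ContractingWith lam.toNNReal Φ := by
    constructor
    · simpa [Real.toNNReal_lt_one] using hlam1
    · apply LipschitzWith.of_dist_le_mul
      intro g g'
      rw [Real.coe_toNNReal lam hlam0]
      rw [ContinuousMap.dist_le (by positivity)]
      intro ξ
      have : dist (Φ g ξ) (Φ g' ξ) ≤ lam * dist (g (fun i => ξ (i + 1)))
          (g' (fun i => ξ (i + 1))) := by
        simp only [hΦ, ContinuousMap.coe_mk, Subtype.dist_eq]
        exact hlip (ξ 0) _ (g _).2 _ (g' _).2
      exact this.trans <| mul_le_mul_of_nonneg_left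
        (ContinuousMap.dist_apply_le_dist _) hlam0
  obtain ⟨g₀, hfix⟩ : ∃ g₀, Function.IsFixedPt Φ g₀ :=
    ⟨_, hcontr.fixedPoint_isFixedPt⟩
  set g : (ℤ → S) → X := fun ξ => (g₀ ξ : X) with hg
  have hgK : ∀ ξ, g ξ ∈ K := fun ξ => (g₀ ξ).2
  have heq : ∀ ξ : ℤ → S, g (fun i => ξ (i + 1)) = h (ξ 0) (g ξ) := by
    intro ξ
    have h1 : g₀ ξ = Φ g₀ ξ := by rw [hfix]
    have h2 : (g₀ ξ : X) = (h (ξ 0)).symm (g₀ (fun i => ξ (i + 1)) : X) := by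
      rw [h1]; simp [hΦ]
    show (g₀ (fun i => ξ (i + 1)) : X) = h (ξ 0) (g₀ ξ : X)
    rw [h2, Homeomorph.apply_symm_apply]
  -- limit lemma: bounds `dist a b ≤ lam ^ n * diam K` for all `n` force `a = b`
  have hlim : ∀ a b : X, (∀ n : ℕ, dist a b ≤ lam ^ n * Metric.diam K) → a = b := by
    intro a b hab
    have htend : Tendsto (fun n : ℕ => lam ^ n * Metric.diam K) atTop (𝓝 0) := by
      have := tendsto_pow_atTop_nhds_zero_of_lt_one hlam0 hlam1
      simpa using this.mul_const (Metric.diam K)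
    have : dist a b ≤ 0 := ge_of_tendsto' htend hab
    exact dist_le_zero.mp this
  refine ⟨g, ⟨hgK, heq⟩, ?_, ?_, ?_⟩
  · exact continuous_subtype_val.comp g₀.continuous
  · intro ξ ζ hfa
    apply hlim
    intro n
    exact repelling_key K hKc lam hlam0 h hlip g g hgK hgK heq heq n ξ ζ
      fun i hi _ => hfa i hi
  · intro g' ⟨hg'K, heq'⟩
    funext ξ
    apply hlim
    intro n
    exact repelling_key K hKc lam hlam0 h hlip g' g hg'K hgK heq' heq n ξ ξ
      fun _ _ _ => rfl
end

section
/- Let S be a finite nonempty set, let (X₁, d₁) and (X₂, d₂) be metric spaces, and let K₁ ⊆ X₁, K₂ ⊆ X₂ be nonempty compact subsets. Let λ ∈ [0, 1) and for each i ∈ S let f_i : X₁ → X₁ and h_i : X₂ → X₂ be homeomorphisms such that f_i(K₁) ⊆ K₁ and d₁(f_i(a), f_i(b)) ≤ λ·d₁(a, b) for a, b ∈ K₁, while h_i⁻¹(K₂) ⊆ K₂ and d₂(h_i⁻¹(a), h_i⁻¹(b)) ≤ λ·d₂(a, b) for a, b ∈ K₂. Let g₁ : Σ_S → K₁ be the unique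 function with g₁(τξ) = f_{ξ_0}(g₁(ξ)) and g₂ : Σ_S → K₂ the unique function with g₂(τξ) = h_{ξ_0}(g₂(ξ)). Consider the one-step skew-product Φ on Σ_S × (X₁ × X₂) generated by the product maps φ_i = f_i × h_i, which is a bijection. Then the maximal invariant set of Φ in Σ_S × (K₁ × K₂) over all integer times equals the graph of g = (g₁, g₂): ⋂_{n∈ℤ} Φ^n(Σ_S × (K₁ × K₂)) = { (ξ, (g₁(ξ), g₂(ξ))) : ξ ∈ Σ_S }; moreover the map ξ ↦ (ξ, g(ξ)) is a homeomorphism from Σ_S onto this set conjugating the shift τ with the restriction of Φ, so the restriction of Φ to its maximal invariant set in Σ_S × (K₁ × K₂) is topologically conjugate to the full shift on Σ_S. -/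
open Metric Set

/-- The shift `(τξ)_i = ξ_{i+1}` on bi-infinite sequences, as a bijection. -/
def shiftEquiv' (S : Type*) : (ℤ → S) ≃ (ℤ → S) where
  toFun ξ := fun i => ξ (i + 1)
  invFun ξ := fun i => ξ (i - 1)
  left_inv ξ := by funext i; simp
  right_inv ξ := by funext i; simp

/-- The one-step skew-product `Φ(ξ, x) = (τξ, φ_{ξ₀}(x))` generated by a family of
bijections `φ_i`, as a bijection of `Σ_S × X`. -/
def oneStepEquiv {S X : Type*} (φ : S → X ≃ X) : ((ℤ → S) × X) ≃ ((ℤ → S) × X) where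
  toFun p := (shiftEquiv' S p.1, φ (p.1 0) p.2)
  invFun p := ((shiftEquiv' S).symm p.1, (φ (p.1 (-1))).symm p.2)
  left_inv p := by
    obtain ⟨ξ, x⟩ := p
    refine Prod.ext ((shiftEquiv' S).left_inv ξ) ?_
    show (φ ((shiftEquiv' S) ξ (-1))).symm (φ (ξ 0) x) = x
    have : (shiftEquiv' S) ξ (-1) = ξ 0 := by show ξ (-1 + 1) = ξ 0; norm_num
    rw [this, Equiv.symm_apply_apply]
  right_inv p := by
    obtain ⟨ξ, x⟩ := p
    refine Prod.ext ((shiftEquiv' S).right_inv ξ) ?_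
    show φ ((shiftEquiv' S).symm ξ 0) ((φ (ξ (-1))).symm x) = x
    have : (shiftEquiv' S).symm ξ 0 = ξ (-1) := by show ξ (0 - 1) = ξ (-1); norm_num
    rw [this, Equiv.apply_symm_apply]


private lemma oneStep_iter_fst {S X : Type*} (φ : S → X ≃ X) (m : ℕ) (ξ : ℤ → S) (x : X) :
    ((⇑(oneStepEquiv φ))^[m] (ξ, x)).1 = fun i => ξ (i + (m : ℤ)) := by
  induction m with
  | zero => funext i; simp
  | succ m ih =>
    rw [Function.iterate_succ_apply']
    funext i
    show ((⇑(oneStepEquiv φ))^[m] (ξ, x)).1 (i + 1) = ξ (i + ((m : ℕ) + 1 : ℤ))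
    rw [ih]
    congr 1
    push_cast
    ring

private lemma oneStep_symm_iter_fst {S X : Type*} (φ : S → X ≃ X) (m : ℕ) (ξ : ℤ → S) (x : X) :
    ((⇑(oneStepEquiv φ).symm)^[m] (ξ, x)).1 = fun i => ξ (i - (m : ℤ)) := by
  induction m with
  | zero => funext i; simp
  | succ m ih =>
    rw [Function.iterate_succ_apply']
    funext i
    show ((⇑(oneStepEquiv φ).symm)^[m] (ξ, x)).1 (i - 1) = ξ (i - ((m : ℕ) + 1 : ℤ))
    rw [ih]
    congr 1
    push_cast
    ring

private lemma oneStep_iter_snd_succ {S X : Type*} (φ : S → X ≃ X) (m : ℕ) (p : (ℤ → S) × X) :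
    ((⇑(oneStepEquiv φ))^[m + 1] p).2 =
      φ (((⇑(oneStepEquiv φ))^[m] p).1 0) (((⇑(oneStepEquiv φ))^[m] p).2) := by
  rw [Function.iterate_succ_apply']
  rfl

private lemma oneStep_symm_iter_snd_succ {S X : Type*} (φ : S → X ≃ X) (m : ℕ) (p : (ℤ → S) × X) :
    ((⇑(oneStepEquiv φ).symm)^[m + 1] p).2 =
      (φ (((⇑(oneStepEquiv φ).symm)^[m] p).1 (-1))).symm (((⇑(oneStepEquiv φ).symm)^[m] p).2) := by
  rw [Function.iterate_succ_apply']
  rfl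

private lemma cont_discrete_apply {S X Y : Type*} [TopologicalSpace S] [DiscreteTopology S]
    [TopologicalSpace X] [TopologicalSpace Y] (ψ : S → X → Y) (hψ : ∀ i, Continuous (ψ i))
    (k : ℤ) : Continuous (fun p : (ℤ → S) × X => ψ (p.1 k) p.2) := by
  rw [continuous_iff_continuousAt]
  intro p
  have hU : IsOpen {q : (ℤ → S) × X | q.1 k = p.1 k} := by
    have hc : Continuous fun q : (ℤ → S) × X => q.1 k := (continuous_apply k).comp continuous_fst
    exact hc.isOpen_preimage {p.1 k} (isOpen_discrete _)
  have hca : ContinuousAt (fun q : (ℤ → S) × X => ψ (p.1 k) q.2) p :=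
    ((hψ (p.1 k)).comp continuous_snd).continuousAt
  apply hca.congr
  filter_upwards [hU.mem_nhds rfl] with q hq
  rw [hq]

/-- **Hyperbolic horseshoe from a product of a contracting and an expanding IFS.**
With `f_i` contractions of `K₁` and `h_i⁻¹` contractions of `K₂`, and `g₁, g₂` the
corresponding invariant sections, the maximal invariant set over all integer times of
the one-step skew-product generated by `φ_i = f_i × h_i` in `Σ_S × (K₁ × K₂)` is the
graph of `g = (g₁, g₂)`, and `ξ ↦ (ξ, g ξ)` is a homeomorphism from `Σ_S` onto it
conjugating the shift with `Φ`. -/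
theorem maximal_invariant_set_product_conjugate_to_shift
    {S : Type*} [Fintype S] [Nonempty S] [TopologicalSpace S] [DiscreteTopology S]
    {X₁ X₂ : Type*} [MetricSpace X₁] [MetricSpace X₂]
    (K₁ : Set X₁) (K₂ : Set X₂) (hK₁ : K₁.Nonempty) (hK₂ : K₂.Nonempty)
    (hK₁c : IsCompact K₁) (hK₂c : IsCompact K₂)
    (lam : ℝ) (hlam0 : 0 ≤ lam) (hlam1 : lam < 1)
    (f : S → X₁ ≃ₜ X₁) (h : S → X₂ ≃ₜ X₂)
    (hf : ∀ i, MapsTo (f i) K₁ K₁)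
    (hflip : ∀ i, ∀ a ∈ K₁, ∀ b ∈ K₁, dist (f i a) (f i b) ≤ lam * dist a b)
    (hh : ∀ i, (h i).symm '' K₂ ⊆ K₂)
    (hhlip : ∀ i, ∀ a ∈ K₂, ∀ b ∈ K₂,
      dist ((h i).symm a) ((h i).symm b) ≤ lam * dist a b)
    (g₁ : (ℤ → S) → X₁) (g₂ : (ℤ → S) → X₂)
    (hg₁K : ∀ ξ, g₁ ξ ∈ K₁) (hg₂K : ∀ ξ, g₂ ξ ∈ K₂)
    (hg₁ : ∀ ξ : ℤ → S, g₁ (fun i => ξ (i + 1)) = f (ξ 0) (g₁ ξ))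
    (hg₁uniq : ∀ g' : (ℤ → S) → X₁,
      ((∀ ξ, g' ξ ∈ K₁) ∧ ∀ ξ : ℤ → S, g' (fun i => ξ (i + 1)) = f (ξ 0) (g' ξ)) →
      g' = g₁)
    (hg₂ : ∀ ξ : ℤ → S, g₂ (fun i => ξ (i + 1)) = h (ξ 0) (g₂ ξ))
    (hg₂uniq : ∀ g' : (ℤ → S) → X₂,
      ((∀ ξ, g' ξ ∈ K₂) ∧ ∀ ξ : ℤ → S, g' (fun i => ξ (i + 1)) = h (ξ 0) (g' ξ)) →
      g' = g₂) :
    (⋂ n : ℤ,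
        ⇑(oneStepEquiv (fun i => ((f i).toEquiv.prodCongr (h i).toEquiv)) ^ n) ''
          (Set.univ ×ˢ (K₁ ×ˢ K₂)) =
        Set.range fun ξ : ℤ → S => (ξ, (g₁ ξ, g₂ ξ))) ∧
    (∃ e : (ℤ → S) ≃ₜ (Set.range fun ξ : ℤ → S => (ξ, (g₁ ξ, g₂ ξ))),
      (∀ ξ : ℤ → S, (e ξ : (ℤ → S) × (X₁ × X₂)) = (ξ, (g₁ ξ, g₂ ξ))) ∧
      ∀ ξ : ℤ → S,
        oneStepEquiv (fun i => ((f i).toEquiv.prodCongr (h i).toEquiv))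
            (ξ, (g₁ ξ, g₂ ξ)) =
          ((fun i => ξ (i + 1)),
            (g₁ fun i => ξ (i + 1), g₂ fun i => ξ (i + 1)))) := by
  classical
  set φ : S → (X₁ × X₂) ≃ (X₁ × X₂) :=
    fun i => ((f i).toEquiv.prodCongr (h i).toEquiv) with hφdef
  set Φ : Equiv.Perm ((ℤ → S) × (X₁ × X₂)) := oneStepEquiv φ with hΦdef
  set P : (ℤ → S) → (ℤ → S) × (X₁ × X₂) := fun ξ => (ξ, (g₁ ξ, g₂ ξ)) with hPdef
  -- basic coercion facts
  have hsymm : ∀ n : ℤ, (Φ ^ n).symm = Φ ^ (-n) := by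
    intro n
    rw [zpow_neg]
    exact (Equiv.Perm.inv_def _).symm
  have coePow : ∀ m : ℕ, ⇑(Φ ^ (m : ℤ)) = (⇑Φ)^[m] := by
    intro m
    rw [zpow_natCast]
    exact Equiv.Perm.coe_pow Φ m
  have coeNeg : ∀ m : ℕ, ⇑(Φ ^ (-(m : ℤ))) = (⇑Φ.symm)^[m] := by
    intro m
    rw [zpow_neg, zpow_natCast, ← inv_pow, ← Equiv.Perm.inv_def Φ]
    exact Equiv.Perm.coe_pow Φ⁻¹ m
  have memIff : ∀ (n : ℤ) (y : (ℤ → S) × (X₁ × X₂)),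
      y ∈ ⇑(Φ ^ n) '' (univ ×ˢ (K₁ ×ˢ K₂)) ↔
        ⇑(Φ ^ (-n)) y ∈ (univ : Set (ℤ → S)) ×ˢ (K₁ ×ˢ K₂) := by
    intro n y
    rw [Equiv.image_eq_preimage_symm, Set.mem_preimage, hsymm n]
  -- the semiconjugacy
  have sem : ∀ ξ : ℤ → S, Φ (P ξ) = P (fun i => ξ (i + 1)) := by
    intro ξ
    show ((fun i => ξ (i + 1)), (f (ξ 0) (g₁ ξ), h (ξ 0) (g₂ ξ))) = _
    rw [hPdef]
    simp only [hg₁ ξ, hg₂ ξ]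
  have fwd : ∀ (m : ℕ) (ξ : ℤ → S), (⇑Φ)^[m] (P ξ) = P (fun i => ξ (i + (m : ℤ))) := by
    intro m
    induction m with
    | zero =>
      intro ξ
      simp only [Function.iterate_zero, id_eq, Nat.cast_zero, add_zero]
    | succ m ih =>
      intro ξ
      rw [Function.iterate_succ_apply', ih, sem]
      apply congrArg P
      funext i
      congr 1
      push_cast
      ring
  have bwd : ∀ (m : ℕ) (ξ : ℤ → S), (⇑Φ.symm)^[m] (P ξ) = P (fun i => ξ (i - (m : ℤ))) := by
    intro m ξ
    have h1 : (⇑Φ)^[m] (P (fun i => ξ (i - (m : ℤ)))) = P ξ := by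
      rw [fwd m]
      apply congrArg P
      funext i
      congr 1
      ring
    calc (⇑Φ.symm)^[m] (P ξ)
        = (⇑Φ.symm)^[m] ((⇑Φ)^[m] (P (fun i => ξ (i - (m : ℤ))))) := by rw [h1]
      _ = P (fun i => ξ (i - (m : ℤ))) :=
          Function.LeftInverse.iterate Φ.symm_apply_apply m _
  -- bounds on the compact sets
  obtain ⟨C₁, hC₁⟩ := Metric.isBounded_iff.1 hK₁c.isBounded
  obtain ⟨C₂, hC₂⟩ := Metric.isBounded_iff.1 hK₂c.isBounded
  -- the set equality
  have main : (⋂ n : ℤ, ⇑(Φ ^ n) '' (univ ×ˢ (K₁ ×ˢ K₂))) = range P := by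
    apply Subset.antisymm
    · rintro ⟨ξ, x₁, x₂⟩ hy
      have hmem : ∀ n : ℤ, ⇑(Φ ^ (-n)) (ξ, (x₁, x₂)) ∈ (univ : Set (ℤ → S)) ×ˢ (K₁ ×ˢ K₂) :=
        fun n => (memIff n _).1 (mem_iInter.1 hy n)
      have hB : ∀ m : ℕ, ((⇑Φ.symm)^[m] (ξ, (x₁, x₂))).2.1 ∈ K₁ := by
        intro m
        have hm := hmem m
        rw [coeNeg m] at hm
        exact hm.2.1
      have hF : ∀ m : ℕ, ((⇑Φ)^[m] (ξ, (x₁, x₂))).2.2 ∈ K₂ := by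
        intro m
        have hm := hmem (-m)
        rw [neg_neg, coePow m] at hm
        exact hm.2.2
      have hPmem1 : ∀ m : ℕ, ((⇑Φ.symm)^[m] (P ξ)).2.1 ∈ K₁ := by
        intro m
        rw [bwd m ξ]
        exact hg₁K _
      have hPmem2 : ∀ m : ℕ, ((⇑Φ)^[m] (P ξ)).2.2 ∈ K₂ := by
        intro m
        rw [fwd m ξ]
        exact hg₂K _
      -- backward contraction step for the first factor
      have step₁ : ∀ m : ℕ,
          dist (((⇑Φ.symm)^[m] (ξ, (x₁, x₂))).2.1) (((⇑Φ.symm)^[m] (P ξ)).2.1) ≤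
            lam * dist (((⇑Φ.symm)^[m + 1] (ξ, (x₁, x₂))).2.1)
              (((⇑Φ.symm)^[m + 1] (P ξ)).2.1) := by
        intro m
        set j : S := ((⇑Φ.symm)^[m] (ξ, (x₁, x₂))).1 (-1) with hj
        have hfst_eq : ((⇑Φ.symm)^[m] (P ξ)).1 (-1) = j := by
          rw [hj]
          show ((⇑Φ.symm)^[m] (ξ, (g₁ ξ, g₂ ξ))).1 (-1) =
            ((⇑Φ.symm)^[m] (ξ, (x₁, x₂))).1 (-1)
          rw [oneStep_symm_iter_fst, oneStep_symm_iter_fst]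
        have hA : ((⇑Φ.symm)^[m + 1] (ξ, (x₁, x₂))).2.1 =
            (f j).symm (((⇑Φ.symm)^[m] (ξ, (x₁, x₂))).2.1) := by
          rw [oneStep_symm_iter_snd_succ, ← hj]
          rfl
        have hB' : ((⇑Φ.symm)^[m + 1] (P ξ)).2.1 =
            (f j).symm (((⇑Φ.symm)^[m] (P ξ)).2.1) := by
          rw [oneStep_symm_iter_snd_succ, hfst_eq]
          rfl
        have h1 : ((⇑Φ.symm)^[m] (ξ, (x₁, x₂))).2.1 =
            f j (((⇑Φ.symm)^[m + 1] (ξ, (x₁, x₂))).2.1) := by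
          rw [hA, Homeomorph.apply_symm_apply]
        have h2 : ((⇑Φ.symm)^[m] (P ξ)).2.1 =
            f j (((⇑Φ.symm)^[m + 1] (P ξ)).2.1) := by
          rw [hB', Homeomorph.apply_symm_apply]
        rw [h1, h2]
        exact hflip j _ (hB (m + 1)) _ (hPmem1 (m + 1))
      -- forward contraction step for the second factor
      have step₂ : ∀ m : ℕ,
          dist (((⇑Φ)^[m] (ξ, (x₁, x₂))).2.2) (((⇑Φ)^[m] (P ξ)).2.2) ≤
            lam * dist (((⇑Φ)^[m + 1] (ξ, (x₁, x₂))).2.2)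
              (((⇑Φ)^[m + 1] (P ξ)).2.2) := by
        intro m
        set j : S := ((⇑Φ)^[m] (ξ, (x₁, x₂))).1 0 with hj
        have hfst_eq : ((⇑Φ)^[m] (P ξ)).1 0 = j := by
          rw [hj]
          show ((⇑Φ)^[m] (ξ, (g₁ ξ, g₂ ξ))).1 0 = ((⇑Φ)^[m] (ξ, (x₁, x₂))).1 0
          rw [oneStep_iter_fst, oneStep_iter_fst]
        have hA : ((⇑Φ)^[m + 1] (ξ, (x₁, x₂))).2.2 =
            h j (((⇑Φ)^[m] (ξ, (x₁, x₂))).2.2) := by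
          rw [oneStep_iter_snd_succ, ← hj]
          rfl
        have hB' : ((⇑Φ)^[m + 1] (P ξ)).2.2 =
            h j (((⇑Φ)^[m] (P ξ)).2.2) := by
          rw [oneStep_iter_snd_succ, hfst_eq]
          rfl
        have h1 : ((⇑Φ)^[m] (ξ, (x₁, x₂))).2.2 =
            (h j).symm (((⇑Φ)^[m + 1] (ξ, (x₁, x₂))).2.2) := by
          rw [hA, Homeomorph.symm_apply_apply]
        have h2 : ((⇑Φ)^[m] (P ξ)).2.2 =
            (h j).symm (((⇑Φ)^[m + 1] (P ξ)).2.2) := by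
          rw [hB', Homeomorph.symm_apply_apply]
        rw [h1, h2]
        exact hhlip j _ (hF (m + 1)) _ (hPmem2 (m + 1))
      -- iterate the contraction estimates
      have est₁ : ∀ m : ℕ, dist x₁ (g₁ ξ) ≤
          lam ^ m * dist (((⇑Φ.symm)^[m] (ξ, (x₁, x₂))).2.1) (((⇑Φ.symm)^[m] (P ξ)).2.1) := by
        intro m
        induction m with
        | zero => simp [hPdef]
        | succ m ih =>
          refine ih.trans ?_
          rw [pow_succ, mul_assoc]
          exact mul_le_mul_of_nonneg_left (step₁ m) (pow_nonneg hlam0 m)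
      have est₂ : ∀ m : ℕ, dist x₂ (g₂ ξ) ≤
          lam ^ m * dist (((⇑Φ)^[m] (ξ, (x₁, x₂))).2.2) (((⇑Φ)^[m] (P ξ)).2.2) := by
        intro m
        induction m with
        | zero => simp [hPdef]
        | succ m ih =>
          refine ih.trans ?_
          rw [pow_succ, mul_assoc]
          exact mul_le_mul_of_nonneg_left (step₂ m) (pow_nonneg hlam0 m)
      have bound₁ : ∀ m : ℕ, dist x₁ (g₁ ξ) ≤ lam ^ m * C₁ := by
        intro m
        refine (est₁ m).trans (mul_le_mul_of_nonneg_left ?_ (pow_nonneg hlam0 m))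
        exact hC₁ (hB m) (hPmem1 m)
      have bound₂ : ∀ m : ℕ, dist x₂ (g₂ ξ) ≤ lam ^ m * C₂ := by
        intro m
        refine (est₂ m).trans (mul_le_mul_of_nonneg_left ?_ (pow_nonneg hlam0 m))
        exact hC₂ (hF m) (hPmem2 m)
      have hlim : ∀ C : ℝ, Filter.Tendsto (fun m : ℕ => lam ^ m * C) Filter.atTop (nhds 0) := by
        intro C
        have := (tendsto_pow_atTop_nhds_zero_of_lt_one hlam0 hlam1).mul_const C
        simpa using this
      have hx₁ : x₁ = g₁ ξ := by
        have hle : dist x₁ (g₁ ξ) ≤ 0 := ge_of_tendsto' (hlim C₁) bound₁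
        exact dist_le_zero.1 hle
      have hx₂ : x₂ = g₂ ξ := by
        have hle : dist x₂ (g₂ ξ) ≤ 0 := ge_of_tendsto' (hlim C₂) bound₂
        exact dist_le_zero.1 hle
      exact ⟨ξ, by rw [hPdef]; simp [hx₁, hx₂]⟩
    · rintro y ⟨ξ, rfl⟩
      refine mem_iInter.2 fun n => (memIff n _).2 ?_
      rcases Int.eq_nat_or_neg n with ⟨m, rfl | rfl⟩
      · rw [coeNeg m, bwd]
        exact Set.mem_prod.2 ⟨mem_univ _, Set.mem_prod.2 ⟨hg₁K _, hg₂K _⟩⟩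
      · rw [neg_neg, coePow m, fwd]
        exact Set.mem_prod.2 ⟨mem_univ _, Set.mem_prod.2 ⟨hg₁K _, hg₂K _⟩⟩
  refine ⟨main, ?_⟩
  -- continuity of Φ and its inverse
  have hcontφ : ∀ i, Continuous ⇑(φ i) := by
    intro i
    rw [hφdef]
    exact ((f i).continuous.comp continuous_fst).prodMk ((h i).continuous.comp continuous_snd)
  have hcontφs : ∀ i, Continuous ⇑(φ i).symm := by
    intro i
    rw [hφdef]
    exact (((f i).symm.continuous.comp continuous_fst)).prodMk
      ((h i).symm.continuous.comp continuous_snd)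
  have hc1 : Continuous fun p : (ℤ → S) × (X₁ × X₂) => (shiftEquiv' S) p.1 := by
    apply continuous_pi
    intro i
    exact (continuous_apply (i + 1)).comp continuous_fst
  have hc1s : Continuous fun p : (ℤ → S) × (X₁ × X₂) => (shiftEquiv' S).symm p.1 := by
    apply continuous_pi
    intro i
    exact (continuous_apply (i - 1)).comp continuous_fst
  have hcontΦ : Continuous ⇑Φ :=
    hc1.prodMk (cont_discrete_apply (fun i => ⇑(φ i)) hcontφ 0)
  have hcontΦs : Continuous ⇑Φ.symm :=
    hc1s.prodMk (cont_discrete_apply (fun i => ⇑(φ i).symm) hcontφs (-1))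
  -- compactness of the maximal invariant set
  have hcomp : ∀ n : ℤ, IsCompact (⇑(Φ ^ n) '' (univ ×ˢ (K₁ ×ˢ K₂))) := by
    intro n
    have hc : IsCompact ((univ : Set (ℤ → S)) ×ˢ (K₁ ×ˢ K₂)) :=
      isCompact_univ.prod (hK₁c.prod hK₂c)
    apply hc.image
    rcases Int.eq_nat_or_neg n with ⟨m, rfl | rfl⟩
    · rw [coePow m]; exact hcontΦ.iterate m
    · rw [coeNeg m]; exact hcontΦs.iterate m
  have hcompact : IsCompact (range P) := by
    rw [← main]
    exact IsCompact.of_isClosed_subset (hcomp 0)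
      (isClosed_iInter fun n => (hcomp n).isClosed) (iInter_subset _ 0)
  haveI : CompactSpace (range P) := isCompact_iff_compactSpace.1 hcompact
  -- the conjugating homeomorphism
  let e₀ : (ℤ → S) ≃ (range P) :=
    { toFun := fun ξ => ⟨P ξ, mem_range_self ξ⟩
      invFun := fun z => (z : (ℤ → S) × (X₁ × X₂)).1
      left_inv := fun ξ => rfl
      right_inv := fun z => by
        obtain ⟨ξ, hξ⟩ := z.2
        apply Subtype.ext
        show P (z : (ℤ → S) × (X₁ × X₂)).1 = z
        rw [← hξ] }
  have hcont_inv : Continuous ⇑e₀.symm := by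
    have hcoe : ⇑e₀.symm = fun z : (range P) => (z : (ℤ → S) × (X₁ × X₂)).1 := rfl
    rw [hcoe]
    exact continuous_fst.comp continuous_subtype_val
  refine ⟨(Continuous.homeoOfEquivCompactToT2 (f := e₀.symm) hcont_inv).symm,
    fun ξ => rfl, fun ξ => sem ξ⟩
end

section
/- Let c ≥ 1, x ∈ ℝ^c and ε > 0. Then there exist: distinct points p, q ∈ ball(x, ε); radii 0 < δ < r such that closedBall(p, r) and closedBall(q, r) are disjoint and both contained in ball(x, ε); a constant λ ∈ (0, 1); an integer m with 1 ≤ m ≤ 2·5^c + 1; homeomorphisms φ_1, …, φ_m of ℝ^c with sup_{y∈ℝ^c} ‖φ_i(y) − y‖ ≤ 2ε for every i; and subsets S₁, S₂ ⊆ {1, …, m}, such that: (i) for each i ∈ S₁, φ_i is λ-Lipschitz on closedBall(p, r) and maps closedBall(p, r) into ball(p, r), and closedBall(p, δ) ⊆ ⋃_{i∈S₁} φ_i(ball(p, δ)); (ii) for each i ∈ S₂, φ_i⁻¹ is λ-Lipschitz on closedBall(q, r) and maps closedBall(q, r) into ball(q, r), and closedBall(q, δ) ⊆ ⋃_{i∈S₂}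 φ_i⁻¹(ball(q, δ)); (iii) there exist y ∈ ball(p, δ) and a finite composition T of maps from {φ_1, …, φ_m} with T(y) ∈ ball(q, δ), and there exist z ∈ ball(q, δ) and a finite composition S of maps from {φ_1, …, φ_m} with S(z) ∈ ball(p, δ). (This provides, arbitrarily close to the identity and localized near any point x, a contracting blending region around p and an expanding blending region around q together with transitions of the generated semigroup from one to the other and vice-versa.) -/
/-! The points are `p = x - u` and `q = x + u` with `‖u‖ = ε / 2`. Around a centre `a` take a
maximal `δ / 2`-separated subset `T ∋ a` of `closedBall a δ`: it is a `δ / 2`-net, and a volume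
count bounds its size by `5 ^ c`. For every `t ∈ T` the map
`y ↦ y + θ(‖y - a‖) • ((t - a) - (y - a) / 4)`, with a plateau cutoff `θ` equal to `1` on
`[0, ε]` and `0` beyond `2 ε`, is the identity plus a `7/8`-Lipschitz displacement of size at
most `ε`, hence a homeomorphism, and it equals the contraction `y ↦ t + (3/4)(y - a)` on
`closedBall a ε`. Since the images `ball t (3δ/4)` of `ball a δ` cover `closedBall a δ`, these
maps form a contracting blending region at `p`, and the inverses of those built at `q` an
expanding one at `q`. The translation by `q - p` carries `p` to `q`, and iterating the
contraction with `t = a = p` carries `q` into `ball p δ`. -/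

open Metric Set

/-- `wordMap φ [i_n, …, i_1] x = φ_{i_n} ∘ ⋯ ∘ φ_{i_1} (x)`: a finite composition of
maps from the family `φ`, applied to `x`. -/
def wordMap {S M : Type*} (φ : S → M → M) : List S → M → M
  | [], x => x
  | i :: l, x => φ i (wordMap φ l x)

open MeasureTheory Module
open scoped NNReal

theorem wordMap_replicate {S M : Type*} (φ : S → M → M) (i : S) (n : ℕ) (x : M) :
    wordMap φ (List.replicate n i) x = (φ i)^[n] x := by
  induction n with
  | zero => rfl
  | succ n ih => rw [List.replicate_succ, wordMap, ih, Function.iterate_succ_apply']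

section Packing

variable {E : Type*} [NormedAddCommGroup E] [NormedSpace ℝ E] [FiniteDimensional ℝ E]

theorem card_mul_pow_le_of_pairwiseDisjoint_ball {T : Finset E} {p : E} {R ρ : ℝ}
    (hR : 0 ≤ R) (hρ : 0 < ρ) (hT : ↑T ⊆ closedBall p R)
    (hdisj : (T : Set E).PairwiseDisjoint (ball · ρ)) :
    (T.card : ℝ) * ρ ^ finrank ℝ E ≤ (R + ρ) ^ finrank ℝ E := by
  borelize E
  set μ : Measure E := Measure.addHaar
  have hunion : ⋃ t ∈ T, ball t ρ ⊆ ball p (R + ρ) := iUnion₂_subset fun t ht =>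
    ball_subset_ball' (by linarith [mem_closedBall.1 (hT ht)])
  have hvol : ∑ t ∈ T, μ (ball t ρ) ≤ μ (ball p (R + ρ)) := by
    rw [← measure_biUnion_finset hdisj fun t _ => measurableSet_ball]
    exact measure_mono hunion
  simp only [Measure.addHaar_ball_of_pos μ _ hρ,
    Measure.addHaar_ball_of_pos μ _ (by linarith : 0 < R + ρ), Finset.sum_const, nsmul_eq_mul,
    ← mul_assoc] at hvol
  rw [ENNReal.mul_le_mul_iff_left (measure_ball_pos μ _ one_pos).ne' measure_ball_lt_top.ne,
    ← ENNReal.ofReal_natCast, ← ENNReal.ofReal_mul (by positivity),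
    ENNReal.ofReal_le_ofReal_iff (by positivity)] at hvol
  exact hvol

theorem card_le_five_pow_of_pairwiseDisjoint_ball {T : Finset E} {p : E} {δ : ℝ} (hδ : 0 < δ)
    (hT : ↑T ⊆ closedBall p δ) (hdisj : (T : Set E).PairwiseDisjoint (ball · (δ / 4))) :
    T.card ≤ 5 ^ finrank ℝ E := by
  have h := card_mul_pow_le_of_pairwiseDisjoint_ball hδ.le (by positivity) hT hdisj
  rw [show δ + δ / 4 = 5 * (δ / 4) by ring, mul_pow] at h
  exact_mod_cast le_of_mul_le_mul_right h (by positivity)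

theorem exists_finset_net_closedBall (p : E) {δ : ℝ} (hδ : 0 < δ) :
    ∃ T : Finset E, p ∈ T ∧ ↑T ⊆ closedBall p δ ∧ T.card ≤ 5 ^ finrank ℝ E ∧
      ∀ y ∈ closedBall p δ, ∃ t ∈ T, dist y t ≤ δ / 2 := by
  classical
  let P : ℕ → Prop := fun n => ∃ T : Finset E, p ∈ T ∧ ↑T ⊆ closedBall p δ ∧
    (T : Set E).PairwiseDisjoint (ball · (δ / 4)) ∧ T.card = n
  have hP : ∀ {n}, P n → n ≤ 5 ^ finrank ℝ E := by
    rintro _ ⟨T, -, hT, hdisj, rfl⟩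
    exact card_le_five_pow_of_pairwiseDisjoint_ball hδ hT hdisj
  have hP₁ : P 1 := ⟨{p}, by simp, by simpa using hδ.le, by simp, rfl⟩
  -- a separated set of maximal cardinality is a net
  obtain ⟨T, hpT, hT, hdisj, hcard⟩ := Nat.findGreatest_spec (hP hP₁) hP₁
  refine ⟨T, hpT, hT, hcard ▸ Nat.findGreatest_le _, fun y hy => ?_⟩
  by_contra! hfar
  have hyT : y ∉ T := fun h => by linarith [hfar y h, dist_self y]
  have hP' : P (T.card + 1) := by
    refine ⟨insert y T, Finset.mem_insert_of_mem hpT, ?_, ?_, Finset.card_insert_of_notMem hyT⟩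
    · simpa [insert_subset_iff] using ⟨hy, hT⟩
    · rw [Finset.coe_insert]
      exact hdisj.insert fun t ht _ => ball_disjoint_ball (by linarith [hfar t ht])
  have := Nat.le_findGreatest (hP hP') hP'
  omega

end Packing

section Perturbation

variable {E : Type*} [NormedAddCommGroup E] [NormedSpace ℝ E]

theorem exists_homeomorph_eq_add_of_lipschitzWith [CompleteSpace E] {g : E → E} {K : ℝ≥0}
    (hg : LipschitzWith K g) (hK : K < 1) : ∃ Φ : E ≃ₜ E, ∀ y, Φ y = y + g y := by
  have hf : ApproximatesLinearOn (fun y => y + g y)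
      ((ContinuousLinearEquiv.refl ℝ E : E ≃L[ℝ] E) : E →L[ℝ] E) univ K := by
    rw [ApproximatesLinearOn.approximatesLinearOn_iff_lipschitzOnWith]
    convert hg.lipschitzOnWith (s := univ)
    ext y
    simp
  have hc : Subsingleton E ∨ K < ‖((ContinuousLinearEquiv.refl ℝ E).symm : E →L[ℝ] E)‖₊⁻¹ := by
    rcases subsingleton_or_nontrivial E with h | h
    · exact .inl h
    · right
      simpa using hK
  exact ⟨hf.toHomeomorph _ hc, fun _ => rfl⟩

end Perturbation

noncomputable def plateau (ε s : ℝ) : ℝ := max 0 (min 1 (2 - s / ε))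

section Plateau

variable {ε s s' : ℝ}

theorem plateau_mem_Icc : plateau ε s ∈ Icc (0 : ℝ) 1 :=
  ⟨le_max_left _ _, max_le zero_le_one (min_le_left _ _)⟩

theorem plateau_eq_one (hε : 0 < ε) (hs : s ≤ ε) : plateau ε s = 1 := by
  have : 1 ≤ 2 - s / ε := by linarith [(div_le_one hε).2 hs]
  simp [plateau, this]

theorem le_of_plateau_ne_zero (hε : 0 < ε) (h : plateau ε s ≠ 0) : s < 2 * ε := by
  by_contra! hs
  have : 2 - s / ε ≤ 0 := by rw [sub_nonpos, le_div_iff₀ hε]; linarith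
  exact h (by simp [plateau, this])

theorem abs_plateau_sub_plateau_le (hε : 0 < ε) : |plateau ε s - plateau ε s'| ≤ |s - s'| / ε :=
  calc |plateau ε s - plateau ε s'| ≤ |min 1 (2 - s / ε) - min 1 (2 - s' / ε)| := by
        simpa only [plateau, max_comm (0 : ℝ)] using abs_max_sub_max_le_abs _ _ _
    _ ≤ |(2 - s / ε) - (2 - s' / ε)| := by
        have h := abs_min_sub_min_le_max (1 : ℝ) (2 - s / ε) 1 (2 - s' / ε)
        rwa [sub_self, abs_zero, max_eq_right (abs_nonneg _)] at h
    _ = |s - s'| / ε := by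
        rw [sub_sub_sub_cancel_left, ← sub_div, abs_div, abs_of_pos hε, abs_sub_comm]

end Plateau

section LocalContraction

variable {E : Type*} [NormedAddCommGroup E] [NormedSpace ℝ E] {ε : ℝ} {a t y : E}

theorem norm_smul_sub_smul_le_of_mem_Icc {s s' M : ℝ} {v v' : E} (hs : s ∈ Icc (0 : ℝ) 1)
    (hs' : s' ∈ Icc (0 : ℝ) 1) (hv : s ≠ 0 → ‖v‖ ≤ M) (hv' : s' ≠ 0 → ‖v'‖ ≤ M) :
    ‖s • v - s' • v'‖ ≤ |s - s'| * M + ‖v - v'‖ := by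
  wlog h : s ≠ 0 generalizing s s' v v'
  · rcases eq_or_ne s' 0 with h' | h'
    · simp [not_not.1 h, h']
    · rw [norm_sub_rev, abs_sub_comm, norm_sub_rev v]
      exact this hs' hs hv' hv h'
  calc ‖s • v - s' • v'‖ = ‖(s - s') • v + s' • (v - v')‖ := by
        rw [sub_smul, smul_sub]; abel_nf
    _ ≤ |s - s'| * M + 1 * ‖v - v'‖ := by
        refine (norm_add_le _ _).trans (add_le_add ?_ ?_) <;> rw [norm_smul, Real.norm_eq_abs]
        · exact mul_le_mul_of_nonneg_left (hv h) (abs_nonneg _)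
        · rw [abs_of_nonneg hs'.1]
          exact mul_le_mul_of_nonneg_right hs'.2 (norm_nonneg _)
    _ = |s - s'| * M + ‖v - v'‖ := by rw [one_mul]

noncomputable def localContractionShift (ε : ℝ) (a t y : E) : E :=
  plateau ε ‖y - a‖ • ((t - a) - (4 : ℝ)⁻¹ • (y - a))

theorem add_localContractionShift_of_norm_le (hε : 0 < ε) (hy : ‖y - a‖ ≤ ε) :
    y + localContractionShift ε a t y = t + (3 / 4 : ℝ) • (y - a) := by
  rw [localContractionShift, plateau_eq_one hε hy, one_smul,
    show (3 / 4 : ℝ) = 1 - 4⁻¹ by norm_num, sub_smul, one_smul]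
  abel

theorem norm_sub_smul_le_of_plateau_ne_zero (hε : 0 < ε) (ht : ‖t - a‖ ≤ ε / 8)
    (hy : plateau ε ‖y - a‖ ≠ 0) : ‖(t - a) - (4 : ℝ)⁻¹ • (y - a)‖ ≤ 5 / 8 * ε := by
  have := le_of_plateau_ne_zero hε hy
  calc ‖(t - a) - (4 : ℝ)⁻¹ • (y - a)‖ ≤ ‖t - a‖ + 4⁻¹ * ‖y - a‖ := by
        simpa [norm_smul] using norm_sub_le (t - a) ((4 : ℝ)⁻¹ • (y - a))
    _ ≤ 5 / 8 * ε := by linarith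

theorem norm_localContractionShift_le (hε : 0 < ε) (ht : ‖t - a‖ ≤ ε / 8) (y : E) :
    ‖localContractionShift ε a t y‖ ≤ ε := by
  rcases eq_or_ne (plateau ε ‖y - a‖) 0 with h | h
  · simp [localContractionShift, h, hε.le]
  rw [localContractionShift, norm_smul, Real.norm_eq_abs, abs_of_nonneg plateau_mem_Icc.1]
  calc _ ≤ 1 * (5 / 8 * ε) := mul_le_mul plateau_mem_Icc.2
        (norm_sub_smul_le_of_plateau_ne_zero hε ht h) (norm_nonneg _) zero_le_one
    _ ≤ ε := by linarith

theorem lipschitzWith_localContractionShift (hε : 0 < ε) (ht : ‖t - a‖ ≤ ε / 8) :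
    LipschitzWith (7 / 8) (localContractionShift ε a t) := by
  refine LipschitzWith.of_dist_le_mul fun y z => ?_
  have hθ : |plateau ε ‖y - a‖ - plateau ε ‖z - a‖| ≤ ‖y - z‖ / ε :=
    (abs_plateau_sub_plateau_le hε).trans <| div_le_div_of_nonneg_right
      (by simpa using abs_norm_sub_norm_le (y - a) (z - a)) hε.le
  have hw : ‖((t - a) - (4 : ℝ)⁻¹ • (y - a)) - ((t - a) - (4 : ℝ)⁻¹ • (z - a))‖ =
      4⁻¹ * ‖y - z‖ := by
    rw [sub_sub_sub_cancel_left, ← smul_sub, sub_sub_sub_cancel_right, norm_smul, norm_sub_rev]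
    norm_num
  rw [dist_eq_norm, dist_eq_norm]
  calc _ ≤ |plateau ε ‖y - a‖ - plateau ε ‖z - a‖| * (5 / 8 * ε) + 4⁻¹ * ‖y - z‖ :=
        hw ▸ norm_smul_sub_smul_le_of_mem_Icc plateau_mem_Icc plateau_mem_Icc
          (norm_sub_smul_le_of_plateau_ne_zero hε ht) (norm_sub_smul_le_of_plateau_ne_zero hε ht)
    _ ≤ ‖y - z‖ / ε * (5 / 8 * ε) + 4⁻¹ * ‖y - z‖ := by gcongr
    _ = ((7 / 8 : NNReal) : ℝ) * ‖y - z‖ := by push_cast; field_simp; ring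

theorem exists_homeomorph_eq_affine_on_closedBall [CompleteSpace E] (hε : 0 < ε)
    (ht : ‖t - a‖ ≤ ε / 8) : ∃ Φ : E ≃ₜ E,
      (∀ y, ‖Φ y - y‖ ≤ ε) ∧ ∀ y ∈ closedBall a ε, Φ y = t + (3 / 4 : ℝ) • (y - a) := by
  obtain ⟨Φ, hΦ⟩ := exists_homeomorph_eq_add_of_lipschitzWith
    (lipschitzWith_localContractionShift hε ht) (by norm_num)
  refine ⟨Φ, fun y => ?_, fun y hy => ?_⟩
  · simpa [hΦ] using norm_localContractionShift_le hε ht y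
  · rw [hΦ, add_localContractionShift_of_norm_le hε (by simpa [dist_eq_norm] using hy)]

end LocalContraction

section Blending

variable {ι κ E : Type*} [NormedAddCommGroup E] {p : E} {δ r L : ℝ}

def IsContractingBlending (F : ι → E → E) (S : Set ι) (p : E) (δ r L : ℝ) : Prop :=
  (∀ i ∈ S, (∀ a ∈ closedBall p r, ∀ b ∈ closedBall p r, ‖F i a - F i b‖ ≤ L * ‖a - b‖) ∧
      MapsTo (F i) (closedBall p r) (ball p r)) ∧
    closedBall p δ ⊆ ⋃ i ∈ S, F i '' ball p δ

theorem IsContractingBlending.image {F : ι → E → E} {G : κ → E → E} {g : κ → ι} {S : Set κ}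
    (h : IsContractingBlending G S p δ r L) (hG : ∀ j, F (g j) = G j) :
    IsContractingBlending F (g '' S) p δ r L := by
  simpa only [IsContractingBlending, forall_mem_image, biUnion_image, hG] using h

variable [NormedSpace ℝ E]

theorem isContractingBlending_of_eqOn_affine {F : ι → E → E} {t : ι → E}
    (hF : ∀ i, ∀ y ∈ closedBall p r, F i y = t i + (3 / 4 : ℝ) • (y - p))
    (ht : ∀ i, ‖t i - p‖ < r / 4) (hδ : 0 < δ) (hδr : δ ≤ r)
    (hnet : ∀ y ∈ closedBall p δ, ∃ i, dist y (t i) ≤ δ / 2) :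
    IsContractingBlending F univ p δ r (3 / 4) := by
  refine ⟨fun i _ => ⟨fun a ha b hb => ?_, fun y hy => ?_⟩, fun y hy => ?_⟩
  · rw [hF i a ha, hF i b hb, add_sub_add_left_eq_sub, ← smul_sub, sub_sub_sub_cancel_right,
      norm_smul]
    norm_num
  · rw [mem_closedBall, dist_eq_norm] at hy
    rw [mem_ball, dist_eq_norm, hF i y (by rwa [mem_closedBall, dist_eq_norm]),
      add_sub_right_comm]
    calc ‖t i - p + (3 / 4 : ℝ) • (y - p)‖ ≤ ‖t i - p‖ + 3 / 4 * ‖y - p‖ := by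
          simpa [norm_smul] using norm_add_le (t i - p) ((3 / 4 : ℝ) • (y - p))
      _ < r := by linarith [ht i]
  · obtain ⟨i, hi⟩ := hnet y hy
    have hz : p + (4 / 3 : ℝ) • (y - t i) ∈ ball p δ := by
      rw [mem_ball, dist_eq_norm, add_sub_cancel_left, norm_smul, ← dist_eq_norm]
      norm_num
      linarith
    refine mem_biUnion (mem_univ i) ⟨_, hz, ?_⟩
    rw [hF i _ (ball_subset_closedBall.trans (closedBall_subset_closedBall hδr) hz),
      add_sub_cancel_left, smul_smul]
    norm_num

theorem iterate_eq_of_eqOn_closedBall {f : E → E} {R L : ℝ}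
    (hf : ∀ y ∈ closedBall p R, f y = p + L • (y - p)) (hL : |L| ≤ 1) {y : E}
    (hy : y ∈ closedBall p R) (n : ℕ) : f^[n] y = p + L ^ n • (y - p) := by
  induction n with
  | zero => simp
  | succ n ih =>
    have hn : f^[n] y ∈ closedBall p R := by
      rw [ih, mem_closedBall, dist_eq_norm, add_sub_cancel_left, norm_smul, norm_pow,
        Real.norm_eq_abs, ← dist_eq_norm]
      exact (mul_le_of_le_one_left dist_nonneg (pow_le_one₀ (abs_nonneg L) hL)).trans hy
    rw [Function.iterate_succ_apply', hf _ hn, ih, add_sub_cancel_left, smul_smul, pow_succ']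

theorem exists_iterate_mem_ball_of_eqOn_closedBall {f : E → E} {R L : ℝ}
    (hf : ∀ y ∈ closedBall p R, f y = p + L • (y - p)) (hL : |L| < 1) {y : E}
    (hy : y ∈ closedBall p R) (hδ : 0 < δ) : ∃ n, 0 < n ∧ f^[n] y ∈ ball p δ := by
  have hlim : Filter.Tendsto (fun n => |L| ^ n * ‖y - p‖) Filter.atTop (nhds 0) := by
    simpa using (tendsto_pow_atTop_nhds_zero_of_lt_one (abs_nonneg L) hL).mul_const ‖y - p‖
  obtain ⟨n, hn, hpos⟩ :=
    ((hlim.eventually (gt_mem_nhds hδ)).and (Filter.eventually_gt_atTop 0)).exists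
  refine ⟨n, hpos, ?_⟩
  rwa [iterate_eq_of_eqOn_closedBall hf hL.le hy, mem_ball, dist_eq_norm, add_sub_cancel_left,
    norm_smul, norm_pow, Real.norm_eq_abs]

end Blending

section Assembly

variable {E : Type*} [NormedAddCommGroup E] {ε : ℝ}

theorem Homeomorph.norm_symm_apply_sub_le {Φ : E ≃ₜ E} (hΦ : ∀ y, ‖Φ y - y‖ ≤ ε) (y : E) :
    ‖Φ.symm y - y‖ ≤ ε := by
  simpa [norm_sub_rev] using hΦ (Φ.symm y)

variable [NormedSpace ℝ E]

theorem exists_pair_closedBall_subset_ball [Nontrivial E] (x : E) (hε : 0 < ε) :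
    ∃ p q : E, ‖q - p‖ = ε ∧ Disjoint (closedBall p (ε / 4)) (closedBall q (ε / 4)) ∧
      closedBall p (ε / 4) ⊆ ball x ε ∧ closedBall q (ε / 4) ⊆ ball x ε := by
  obtain ⟨u, hu⟩ := exists_norm_eq E (by positivity : 0 ≤ ε / 2)
  have hpq : ‖(x + u) - (x - u)‖ = ε := by
    rw [add_sub_sub_cancel, ← two_smul ℝ u, norm_smul, hu]
    norm_num
    ring
  refine ⟨x - u, x + u, hpq, closedBall_disjoint_closedBall ?_,
    closedBall_subset_ball' ?_, closedBall_subset_ball' ?_⟩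
  · rw [dist_comm, dist_eq_norm, hpq]; linarith
  · rw [dist_eq_norm, sub_sub_cancel_left, norm_neg, hu]; linarith
  · rw [dist_eq_norm, add_sub_cancel_left, hu]; linarith

theorem exists_contracting_blending_family [FiniteDimensional ℝ E] (hε : 0 < ε) (a : E) :
    ∃ T : Finset E, a ∈ T ∧ T.card ≤ 5 ^ finrank ℝ E ∧ ∃ Φ : T → E ≃ₜ E,
      (∀ t y, ‖Φ t y - y‖ ≤ ε) ∧ (∀ t, ∀ y ∈ closedBall a ε, Φ t y = t + (3 / 4 : ℝ) • (y - a)) ∧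
      IsContractingBlending (fun t => ⇑(Φ t)) univ a (ε / 32) (ε / 4) (3 / 4) := by
  obtain ⟨T, haT, hT, hcard, hnet⟩ := exists_finset_net_closedBall a (by positivity : 0 < ε / 32)
  have hTa (t : T) : ‖(t : E) - a‖ ≤ ε / 32 := by simpa [dist_eq_norm] using hT t.2
  choose Φ hΦ using fun t : T =>
    exists_homeomorph_eq_affine_on_closedBall hε ((hTa t).trans (by linarith))
  refine ⟨T, haT, hcard, Φ, fun t => (hΦ t).1, fun t => (hΦ t).2,
    isContractingBlending_of_eqOn_affine (t := Subtype.val) ?_ (fun t => by linarith [hTa t])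
      (by positivity) (by linarith) fun y hy => ?_⟩
  · exact fun t y hy => (hΦ t).2 y (closedBall_subset_closedBall (by linarith) hy)
  · obtain ⟨t, ht, hyt⟩ := hnet y hy
    exact ⟨⟨t, ht⟩, hyt⟩

end Assembly

/-- **Blending regions with transition near any point, close to the identity.**
Near any `x ∈ ℝ^c` there are distinct points `p, q`, radii `0 < δ < r` with disjoint
closed `r`-balls inside `ball x ε`, a contraction rate `λ ∈ (0,1)`, and at most
`2·5^c + 1` homeomorphisms `φ_i` of `ℝ^c`, uniformly `2ε`-close to the identity, such
that: a subfamily `S₁` forms a contracting blending region around `p` (each `φ_i`,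
`i ∈ S₁`, is a `λ`-contraction of `closedBall p r` into `ball p r` and the images
`φ_i(ball p δ)` cover `closedBall p δ`); a subfamily `S₂` forms an expanding blending
region around `q` (same with `φ_i⁻¹` around `q`); and the generated semigroup has
transitions from `ball p δ` to `ball q δ` and vice-versa. -/
theorem blending_regions_with_transition_near_identity
    (c : ℕ) (hc : 1 ≤ c) (x : EuclideanSpace ℝ (Fin c)) (ε : ℝ) (hε : 0 < ε) :
    ∃ p q : EuclideanSpace ℝ (Fin c), p ≠ q ∧ p ∈ ball x ε ∧ q ∈ ball x ε ∧
    ∃ δ r : ℝ, 0 < δ ∧ δ < r ∧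
      Disjoint (closedBall p r) (closedBall q r) ∧
      closedBall p r ⊆ ball x ε ∧ closedBall q r ⊆ ball x ε ∧
    ∃ L : ℝ, 0 < L ∧ L < 1 ∧
    ∃ m : ℕ, 1 ≤ m ∧ m ≤ 2 * 5 ^ c + 1 ∧
    ∃ (φ : Fin m → (EuclideanSpace ℝ (Fin c) ≃ₜ EuclideanSpace ℝ (Fin c)))
      (S₁ S₂ : Set (Fin m)),
      (∀ i, ∀ y, ‖φ i y - y‖ ≤ 2 * ε) ∧
      (∀ i ∈ S₁,
        (∀ a ∈ closedBall p r, ∀ b ∈ closedBall p r,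
          ‖φ i a - φ i b‖ ≤ L * ‖a - b‖) ∧
        MapsTo (φ i) (closedBall p r) (ball p r)) ∧
      closedBall p δ ⊆ ⋃ i ∈ S₁, φ i '' ball p δ ∧
      (∀ i ∈ S₂,
        (∀ a ∈ closedBall q r, ∀ b ∈ closedBall q r,
          ‖(φ i).symm a - (φ i).symm b‖ ≤ L * ‖a - b‖) ∧
        MapsTo ((φ i).symm) (closedBall q r) (ball q r)) ∧
      closedBall q δ ⊆ ⋃ i ∈ S₂, (φ i).symm '' ball q δ ∧
      (∃ y ∈ ball p δ, ∃ l : List (Fin m), l ≠ [] ∧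
        wordMap (fun i => ⇑(φ i)) l y ∈ ball q δ) ∧
      (∃ z ∈ ball q δ, ∃ l : List (Fin m), l ≠ [] ∧
        wordMap (fun i => ⇑(φ i)) l z ∈ ball p δ) := by
  have : Nontrivial (EuclideanSpace ℝ (Fin c)) := by
    have : Nonempty (Fin c) := ⟨⟨0, hc⟩⟩
    infer_instance
  obtain ⟨p, q, hpq, hdisj, hp, hq⟩ := exists_pair_closedBall_subset_ball x hε
  obtain ⟨Tp, hpT, hTp, Φp, hΦp, hΦp_affine, hBp⟩ := exists_contracting_blending_family hε p
  obtain ⟨Tq, -, hTq, Φq, hΦq, -, hBq⟩ := exists_contracting_blending_family hε q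
  rw [finrank_euclideanSpace_fin] at hTp hTq
  obtain ⟨n, hn, hqp⟩ := exists_iterate_mem_ball_of_eqOn_closedBall
    (by simpa using hΦp_affine ⟨p, hpT⟩) (by norm_num : |(3 / 4 : ℝ)| < 1)
    (by rw [mem_closedBall, dist_eq_norm, hpq]) (by positivity : 0 < ε / 32)
  let ψ : Option (Tp ⊕ Tq) → EuclideanSpace ℝ (Fin c) ≃ₜ EuclideanSpace ℝ (Fin c)
    | none => Homeomorph.addLeft (q - p)
    | some (.inl t) => Φp t
    | some (.inr t) => (Φq t).symm
  have hψ : ∀ j y, ‖ψ j y - y‖ ≤ ε := by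
    rintro (_ | t | t) y
    · simp [ψ, hpq]
    · exact hΦp t y
    · exact Homeomorph.norm_symm_apply_sub_le (hΦq t) y
  let e := Fintype.equivFin (Option (Tp ⊕ Tq))
  have hm : Fintype.card (Option (Tp ⊕ Tq)) = Tp.card + Tq.card + 1 := by simp
  let φ i := ψ (e.symm i)
  have hB₁ : IsContractingBlending (fun i => ⇑(φ i)) ((e ∘ some ∘ .inl) '' univ) p
      (ε / 32) (ε / 4) (3 / 4) := hBp.image fun t => by simp [φ, ψ]
  have hB₂ : IsContractingBlending (fun i => ⇑(φ i).symm) ((e ∘ some ∘ .inr) '' univ) q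
      (ε / 32) (ε / 4) (3 / 4) := hBq.image fun t => by simp [φ, ψ]
  refine ⟨p, q, fun h => by simp [h] at hpq; linarith, hp (mem_closedBall_self (by positivity)),
    hq (mem_closedBall_self (by positivity)), ε / 32, ε / 4, by positivity, by linarith, hdisj, hp,
    hq, 3 / 4, by norm_num, by norm_num, _, by omega, by omega, φ, _, _,
    fun i y => (hψ _ y).trans (by linarith), hB₁.1, hB₁.2, hB₂.1, hB₂.2,
    ⟨p, mem_ball_self (by positivity), [e none], by simp, by simp [φ, ψ, wordMap]; positivity⟩,
    ⟨q, mem_ball_self (by positivity), List.replicate n (e (some (.inl ⟨p, hpT⟩))),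
      by simp [hn.ne'], by simpa [wordMap_replicate, φ, ψ] using hqp⟩⟩
end
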